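/- arXiv:2512.10534 — 6 statements merged into one kernel-verified Lean document; each statement's English description precedes it below -/
import Mathlib

section
/- Let ABC be an acute-angled triangle with circumcenter O, and let P be the foot of the altitude from A to line BC. If ∠BCA ≥ ∠ABC + 30°, then ∠CAB + ∠COP < 90°. -/
/-!
Let `R` be the circumradius and `α, β, γ` the angles at `A, B, C`. By the law of sines,
`CP = b cos γ = 2R sin β cos γ = R (sin α - sin (γ - β)) ≤ R (sin α - 1/2) < R / 2`,
so `OP ≥ OC - CP = R - CP > CP`. In triangle `OCP` the longer side `OP` faces the angle
`∠OCP = 90° - α`, hence `∠COP < 90° - α`.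
-/

open EuclideanGeometry Real
open scoped RealInnerProductSpace

variable {V P : Type*} [NormedAddCommGroup V] [InnerProductSpace ℝ V] [MetricSpace P]
  [NormedAddTorsor V P]

theorem affineSpan_eq_top_of_finrank_eq_two [FiniteDimensional ℝ V]
    (hV : Module.finrank ℝ V = 2) {A B C : P} (h : AffineIndependent ℝ ![A, B, C]) :
    affineSpan ℝ {A, B, C} = ⊤ := by
  simpa only [Matrix.range_cons, Matrix.range_empty, Set.union_empty, Set.singleton_union] using
    h.affineSpan_eq_top_iff_card_eq_finrank_add_one.2 (by simp [hV])

theorem dist_eq_two_mul_dist_mul_sin_angle {A B C O : P} (hT : ¬Collinear ℝ {A, B, C})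
    (hO : O ∈ affineSpan ℝ {A, B, C}) (hB : dist O A = dist O B) (hC : dist O A = dist O C) :
    dist B C = 2 * dist O A * sin (∠ B A C) := by
  let t : Affine.Triangle ℝ P := ⟨![A, B, C], affineIndependent_iff_not_collinear_set.mpr hT⟩
  have hR : dist O A = t.circumradius := by
    refine t.eq_circumradius_of_dist_eq (p := O) ?_ fun i => ?_
    · simpa only [t, Matrix.range_cons, Matrix.range_empty, Set.union_empty,
        Set.singleton_union] using hO
    · fin_cases i <;> simp [t, dist_comm _ O, ← hB, ← hC]
  have hsin := t.dist_div_sin_angle_eq_two_mul_circumradius (i₁ := 1) (i₂ := 0) (i₃ := 2)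
    (by decide) (by decide) (by decide)
  rw [div_eq_iff (sin_ne_zero_of_not_collinear _)] at hsin
  · simpa [t, hR] using hsin
  · simpa [t, Set.insert_comm] using hT

theorem dist_eq_two_mul_dist_mul_cos_angle_of_dist_eq {B C O : P} (h : dist O B = dist O C) :
    dist B C = 2 * dist O C * cos (∠ O C B) := by
  have hinner : 2 * ⟪O -ᵥ C, B -ᵥ C⟫ = dist B C ^ 2 := by
    have := norm_sub_sq_real (O -ᵥ C) (B -ᵥ C)
    rw [vsub_sub_vsub_cancel_right, ← dist_eq_norm_vsub, ← dist_eq_norm_vsub, ← dist_eq_norm_vsub,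
      h] at this
    linarith
  rcases eq_or_ne B C with rfl | hBC
  · simp
  have hpos : 0 < dist B C := dist_pos.mpr hBC
  have hcos := InnerProductGeometry.cos_angle_mul_norm_mul_norm (O -ᵥ C) (B -ᵥ C)
  rw [← dist_eq_norm_vsub, ← dist_eq_norm_vsub] at hcos
  rw [angle]
  nlinarith

theorem angle_circumcenter_eq_pi_div_two_sub {A B C O : P} (hT : ¬Collinear ℝ {A, B, C})
    (hO : O ∈ affineSpan ℝ {A, B, C}) (hB : dist O A = dist O B) (hC : dist O A = dist O C)
    (hA : ∠ B A C ≤ π / 2) : ∠ O C B = π / 2 - ∠ B A C := by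
  have hsin := dist_eq_two_mul_dist_mul_sin_angle hT hO hB hC
  have hcos := dist_eq_two_mul_dist_mul_cos_angle_of_dist_eq (hB.symm.trans hC)
  have hR : 0 < dist O A := by
    have hBC : 0 < dist B C := dist_pos.mpr (ne₂₃_of_not_collinear hT)
    nlinarith [sin_nonneg_of_nonneg_of_le_pi (angle_nonneg B A C) (angle_le_pi B A C)]
  have hcos_eq : cos (∠ O C B) = cos (π / 2 - ∠ B A C) := by
    rw [← hC] at hcos
    rw [cos_pi_div_two_sub]
    nlinarith
  exact injOn_cos ⟨angle_nonneg _ _ _, angle_le_pi _ _ _⟩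
    ⟨by linarith, by linarith [angle_nonneg B A C, pi_pos]⟩ hcos_eq

theorem two_mul_sin_mul_cos_lt_half {β γ : ℝ} (hγ : γ < π / 2) (hβγ : π / 2 < β + γ)
    (h : β + π / 6 ≤ γ) : 2 * sin β * cos γ < 1 / 2 := by
  have hsub : 1 / 2 ≤ sin (γ - β) := by
    rw [← sin_pi_div_six]
    exact sin_le_sin_of_le_of_le_pi_div_two (by linarith [pi_pos]) (by linarith) (by linarith)
  have hadd : sin (β + γ) < 1 := by
    rw [← sin_pi_sub, ← sin_pi_div_two]
    exact sin_lt_sin_of_lt_of_le_pi_div_two (by linarith) le_rfl (by linarith)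
  have : 2 * sin β * cos γ = sin (β + γ) - sin (γ - β) := by
    rw [sin_add, sin_sub]; ring
  linarith

theorem exists_pos_smul_vsub_eq_of_inner_eq_zero {A B C F : P} (hF : Collinear ℝ {B, C, F})
    (hfoot : ⟪A -ᵥ F, B -ᵥ C⟫ = 0) (hC : ∠ B C A < π / 2) :
    ∃ r : ℝ, 0 < r ∧ r • (B -ᵥ C) = F -ᵥ C := by
  have hBC : 0 < ‖B -ᵥ C‖ := norm_pos_iff.2 (vsub_ne_zero.2 (by rintro rfl; simp at hC))
  have hAC : 0 < ‖A -ᵥ C‖ := norm_pos_iff.2 (vsub_ne_zero.2 (by rintro rfl; simp at hC))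
  obtain ⟨r, hr⟩ : ∃ r : ℝ, r • (B -ᵥ C) = F -ᵥ C := by
    have hFCB : F ∈ line[ℝ, C, B] :=
      hF.mem_affineSpan_of_mem_of_ne (by simp) (by simp) (by simp) (by rintro rfl; simp at hC)
    rwa [← vsub_vadd F C, vadd_left_mem_affineSpan_pair] at hFCB
  have hinner : ⟪B -ᵥ C, A -ᵥ C⟫ = r * ‖B -ᵥ C‖ ^ 2 := by
    rw [← vsub_sub_vsub_cancel_right A F C, ← hr, inner_sub_left, inner_smul_left] at hfoot
    rw [real_inner_comm, ← real_inner_self_eq_norm_sq]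
    simpa [sub_eq_zero] using hfoot
  have hpos : 0 < ⟪B -ᵥ C, A -ᵥ C⟫ := by
    have hcos : 0 < cos (∠ B C A) :=
      cos_pos_of_mem_Ioo ⟨by linarith [angle_nonneg B C A, pi_pos], hC⟩
    rw [← InnerProductGeometry.cos_angle_mul_norm_mul_norm]
    positivity
  rw [hinner] at hpos
  exact ⟨r, (mul_pos_iff_of_pos_right (by positivity)).1 hpos, hr⟩

theorem dist_eq_cos_angle_mul_dist_of_inner_eq_zero {A B C F : P} {r : ℝ} (hr : 0 < r)
    (hrF : r • (B -ᵥ C) = F -ᵥ C) (hfoot : ⟪A -ᵥ F, B -ᵥ C⟫ = 0) :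
    dist C F = cos (∠ B C A) * dist A C := by
  have hright : ∠ A F C = π / 2 := by
    rw [angle, ← InnerProductGeometry.inner_eq_zero_iff_angle_eq_pi_div_two,
      ← neg_vsub_eq_vsub_rev F C, ← hrF, inner_neg_right, inner_smul_right, hfoot, mul_zero,
      neg_zero]
  rw [← cos_angle_mul_dist_of_angle_eq_pi_div_two hright, angle_comm F C A,
    angle_smul_right_of_pos A hr hrF, angle_comm]

theorem not_collinear_of_angle_pos_of_lt_pi_div_two {p₁ p₂ p₃ : P} (h0 : 0 < ∠ p₁ p₂ p₃)
    (h : ∠ p₁ p₂ p₃ < π / 2) : ¬Collinear ℝ {p₁, p₂, p₃} := by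
  rw [collinear_iff_eq_or_eq_or_angle_eq_zero_or_angle_eq_pi]
  rintro (rfl | rfl | h' | h')
  · simp at h
  · simp at h
  · linarith
  · linarith [pi_pos]

theorem imo2001_p1_general (A B C O P : EuclideanSpace ℝ (Fin 2))
    (hABC : AffineIndependent ℝ ![A, B, C])
    (hacuteA : ∠ B A C < π / 2) (hacuteC : ∠ B C A < π / 2)
    (hOA : dist O A = dist O B) (hOB : dist O B = dist O C)
    (hPline : Collinear ℝ {B, C, P})
    (hPfoot : inner ℝ (A - P) (B - C) = (0 : ℝ))
    (hangle : ∠ A B C + π / 6 ≤ ∠ B C A) :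
    ∠ C A B + ∠ C O P < π / 2 := by
  have hT : ¬Collinear ℝ {A, B, C} := affineIndependent_iff_not_collinear_set.mp hABC
  have hspan := affineSpan_eq_top_of_finrank_eq_two finrank_euclideanSpace_fin hABC
  have hsum := angle_add_angle_add_angle_eq_pi C (ne₁₂_of_not_collinear hT).symm
  rw [angle_comm C A B] at hsum ⊢
  have hR : 0 < dist O A := dist_pos.2 fun h =>
    ne₁₂_of_not_collinear hT (dist_eq_zero.1 (by rw [← h, ← hOA, h, dist_self]))
  set R := dist O A
  have hb : dist A C = 2 * R * sin (∠ A B C) := by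
    rw [Set.insert_comm] at hT hspan
    simpa [← hOA] using
      dist_eq_two_mul_dist_mul_sin_angle hT (hspan ▸ AffineSubspace.mem_top _ _ _) hOA.symm hOB
  have hOCB := angle_circumcenter_eq_pi_div_two_sub hT (hspan ▸ AffineSubspace.mem_top _ _ _)
    hOA (hOA.trans hOB) hacuteA.le
  obtain ⟨r, hr, hrP⟩ := exists_pos_smul_vsub_eq_of_inner_eq_zero hPline hPfoot hacuteC
  have hPCO : ∠ P C O = π / 2 - ∠ B A C := by
    rw [angle_comm, angle_smul_right_of_pos O hr hrP, hOCB]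
  have hCP : dist C P < R / 2 := by
    have := two_mul_sin_mul_cos_lt_half hacuteC (by linarith) hangle
    rw [dist_eq_cos_angle_mul_dist_of_inner_eq_zero hr hrP hPfoot, hb]
    nlinarith
  have hPO : dist P C < dist P O := by
    rw [dist_comm P O, dist_comm P C]
    linarith [dist_triangle O P C, dist_comm C P]
  have hncol : ¬Collinear ℝ {P, C, O} :=
    not_collinear_of_angle_pos_of_lt_pi_div_two (by linarith [angle_nonneg A B C]) (by linarith)
  have := (angle_lt_iff_dist_lt hncol).2 hPO
  rw [angle_comm C O P]
  linarith

/-- IMO 2001 P1: `ABC` is an acute triangle with circumcenter `O`, `P` is the foot of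
the altitude from `A` to line `BC`.  If `∠BCA ≥ ∠ABC + 30°` then `∠CAB + ∠COP < 90°`. -/
theorem imo2001_p1 (A B C O P : EuclideanSpace ℝ (Fin 2))
    (hABC : AffineIndependent ℝ ![A, B, C])
    (hacuteA : ∠ B A C < π / 2) (hacuteB : ∠ A B C < π / 2) (hacuteC : ∠ B C A < π / 2)
    (hOA : dist O A = dist O B) (hOB : dist O B = dist O C)
    (hPline : Collinear ℝ {B, C, P})
    (hPfoot : inner ℝ (A - P) (B - C) = (0 : ℝ))
    (hangle : ∠ A B C + π / 6 ≤ ∠ B C A) :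
    ∠ C A B + ∠ C O P < π / 2 :=
  imo2001_p1_general A B C O P hABC hacuteA hacuteC hOA hOB hPline hPfoot hangle
end

section
/- Let ABCDEF be a convex hexagon such that for each pair of opposite sides (AB and DE, BC and EF, CD and FA), the distance between the midpoints of the two sides equals (√3/2) times the sum of their lengths. Then all interior angles of the hexagon are equal (each equals 120°). -/
open EuclideanGeometry Real
open scoped RealInnerProductSpace

/-!
Let `a = v₃ - v₀`, `b = v₄ - v₁`, `c = v₅ - v₂` be the main diagonals. For the opposite sides
`v₀v₁` and `v₃v₄` the midpoints differ by `(a + b) / 2` and the side vectors differ by `a - b`,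
so the hypothesis and the triangle inequality give `3‖a - b‖² ≤ ‖a + b‖²`; likewise
`3‖b - c‖² ≤ ‖b + c‖²` and `3‖c + a‖² ≤ ‖c - a‖²`. The three slacks add up to
`-4‖a - b + c‖²`, so they all vanish: `b = a + c`, `‖a‖ = ‖c‖` and `2⟪c, a⟫ = -‖c‖‖a‖`.
Equality in the triangle inequality makes `v₀ - v₁` point along `c` and `v₂ - v₁` along `a`,
so the angle at `v₁` is the angle between `c` and `a`, namely `2π/3`. Relabelling the vertices
cyclically gives the other angles.
-/

section
variable {E : Type*} [NormedAddCommGroup E] [NormedSpace ℝ E] {P Q R S : E}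

theorem dist_midpoint_midpoint_eq_norm_add_div_two (x y z w : E) :
    dist (midpoint ℝ x y) (midpoint ℝ z w) = ‖(z - x) + (w - y)‖ / 2 := by
  rw [dist_comm, dist_eq_norm, midpoint_eq_smul_add, midpoint_eq_smul_add, ← smul_sub,
    norm_smul, add_sub_add_comm, invOf_eq_inv, norm_inv, Real.norm_two, inv_mul_eq_div]

theorem sameRay_sub_of_norm_sub_eq_add [StrictConvexSpace ℝ E] {p q : E}
    (h : ‖p - q‖ = ‖p‖ + ‖q‖) : SameRay ℝ p (p - q) := by
  rw [sub_eq_add_neg] at h ⊢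
  rw [← norm_neg q] at h
  exact SameRay.rfl.add_right (sameRay_iff_norm_add.mpr h)

theorem norm_add_eq_sqrt_three_mul_of_dist_midpoint
    (h : dist (midpoint ℝ P Q) (midpoint ℝ R S) = √3 / 2 * (dist P Q + dist R S)) :
    ‖(R - P) + (S - Q)‖ = √3 * (‖Q - P‖ + ‖S - R‖) := by
  rw [dist_midpoint_midpoint_eq_norm_add_div_two, dist_eq_norm', dist_eq_norm'] at h
  linarith

theorem three_mul_norm_sub_sq_le_of_dist_midpoint
    (h : dist (midpoint ℝ P Q) (midpoint ℝ R S) = √3 / 2 * (dist P Q + dist R S)) :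
    3 * ‖(R - P) - (S - Q)‖ ^ 2 ≤ ‖(R - P) + (S - Q)‖ ^ 2 := by
  have htri : ‖(R - P) - (S - Q)‖ ≤ ‖Q - P‖ + ‖S - R‖ := by
    rw [show (R - P) - (S - Q) = (Q - P) - (S - R) by abel]
    exact norm_sub_le _ _
  rw [norm_add_eq_sqrt_three_mul_of_dist_midpoint h, mul_pow, sq_sqrt zero_le_three]
  gcongr

theorem norm_sub_eq_add_of_dist_midpoint
    (h : dist (midpoint ℝ P Q) (midpoint ℝ R S) = √3 / 2 * (dist P Q + dist R S))
    (heq : 3 * ‖(R - P) - (S - Q)‖ ^ 2 = ‖(R - P) + (S - Q)‖ ^ 2) :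
    ‖(Q - P) - (S - R)‖ = ‖Q - P‖ + ‖S - R‖ := by
  rw [norm_add_eq_sqrt_three_mul_of_dist_midpoint h, mul_pow, sq_sqrt zero_le_three,
    show (R - P) - (S - Q) = (Q - P) - (S - R) by abel] at heq
  exact (sq_eq_sq₀ (norm_nonneg _) (by positivity)).mp (by linarith)

end

section
variable {V : Type*} [NormedAddCommGroup V] [InnerProductSpace ℝ V]

theorem angle_eq_two_pi_div_three_of_two_inner_eq {x y : V} (hx : x ≠ 0) (hy : y ≠ 0)
    (h : 2 * ⟪x, y⟫ = -(‖x‖ * ‖y‖)) : InnerProductGeometry.angle x y = 2 * π / 3 := by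
  have hcos : ⟪x, y⟫ / (‖x‖ * ‖y‖) = cos (π - π / 3) := by
    rw [cos_pi_sub, cos_pi_div_three, div_eq_iff (by positivity)]
    linarith
  rw [InnerProductGeometry.angle, hcos, arccos_cos (by linarith [pi_pos]) (by linarith [pi_pos])]
  ring

theorem angle_eq_angle_of_sameRay {x x' y y' : V} (hx : SameRay ℝ x x') (hy : SameRay ℝ y y')
    (hx₀ : x ≠ 0) (hx'₀ : x' ≠ 0) (hy₀ : y ≠ 0) (hy'₀ : y' ≠ 0) :
    InnerProductGeometry.angle x y = InnerProductGeometry.angle x' y' := by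
  obtain ⟨r, hr, rfl⟩ := hx.exists_pos_left hx₀ hx'₀
  obtain ⟨s, hs, rfl⟩ := hy.exists_pos_left hy₀ hy'₀
  rw [InnerProductGeometry.angle_smul_left_of_pos _ _ hr,
    InnerProductGeometry.angle_smul_right_of_pos _ _ hs]

theorem norm_add_sq_sub_three_mul_norm_sub_sq_cyclic (x y z : V) :
    (‖x + y‖ ^ 2 - 3 * ‖x - y‖ ^ 2) + (‖y + z‖ ^ 2 - 3 * ‖y - z‖ ^ 2)
      + (‖z - x‖ ^ 2 - 3 * ‖z + x‖ ^ 2) = -4 * ‖x - y + z‖ ^ 2 := by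
  simp only [norm_add_sq_real, norm_sub_sq_real, inner_sub_left, real_inner_comm x z]
  ring

theorem eq_add_and_three_mul_norm_sub_sq_eq {x y z : V}
    (hxy : 3 * ‖x - y‖ ^ 2 ≤ ‖x + y‖ ^ 2) (hyz : 3 * ‖y - z‖ ^ 2 ≤ ‖y + z‖ ^ 2)
    (hzx : 3 * ‖z + x‖ ^ 2 ≤ ‖z - x‖ ^ 2) :
    y = x + z ∧ 3 * ‖x - y‖ ^ 2 = ‖x + y‖ ^ 2 ∧ 3 * ‖y - z‖ ^ 2 = ‖y + z‖ ^ 2 := by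
  have hsum := norm_add_sq_sub_three_mul_norm_sub_sq_cyclic x y z
  have hzero : ‖x - y + z‖ ^ 2 = 0 := by linarith [sq_nonneg ‖x - y + z‖]
  refine ⟨?_, by linarith, by linarith⟩
  rw [sq_eq_zero_iff, norm_eq_zero] at hzero
  linear_combination (norm := module) -hzero

theorem two_inner_eq_neg_norm_mul_norm {x y z : V} (hy : y = x + z)
    (hxy : 3 * ‖x - y‖ ^ 2 = ‖x + y‖ ^ 2) (hyz : 3 * ‖y - z‖ ^ 2 = ‖y + z‖ ^ 2) :
    2 * ⟪z, x⟫ = -(‖z‖ * ‖x‖) := by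
  subst hy
  rw [sub_add_cancel_left, norm_neg, ← add_assoc, norm_add_sq_real, norm_add_sq_real,
    inner_add_left, real_inner_self_eq_norm_sq] at hxy
  rw [add_sub_cancel_right, add_assoc, norm_add_sq_real, norm_add_sq_real, inner_add_right,
    real_inner_self_eq_norm_sq] at hyz
  have hnorm : ‖x‖ = ‖z‖ := by
    have := real_inner_comm x z
    nlinarith [norm_nonneg x, norm_nonneg z]
  rw [hnorm]
  nlinarith [real_inner_comm x z]

theorem angle_zero_one_two_eq_two_pi_div_three (v : Fin 6 → V) (hne : ∀ i, v (i + 1) ≠ v i)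
    (hmid : ∀ i : Fin 6,
      dist (midpoint ℝ (v i) (v (i + 1))) (midpoint ℝ (v (i + 3)) (v (i + 4)))
        = √3 / 2 * (dist (v i) (v (i + 1)) + dist (v (i + 3)) (v (i + 4)))) :
    ∠ (v 0) (v 1) (v 2) = 2 * π / 3 := by
  have h₀ := hmid 0
  have h₁ := hmid 1
  have h₂ := hmid 2
  simp only [Fin.reduceAdd, zero_add] at h₀ h₁ h₂
  have i₀ := three_mul_norm_sub_sq_le_of_dist_midpoint h₀
  have i₁ := three_mul_norm_sub_sq_le_of_dist_midpoint h₁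
  have i₂ := three_mul_norm_sub_sq_le_of_dist_midpoint h₂
  -- the third pair of opposite sides sees the first diagonal reversed: `v 0 - v 3`
  rw [← neg_sub (v 3), sub_neg_eq_add, ← sub_eq_add_neg] at i₂
  obtain ⟨hb, e₀, e₁⟩ := eq_add_and_three_mul_norm_sub_sq_eq i₀ i₁ i₂
  have hca := two_inner_eq_neg_norm_mul_norm hb e₀ e₁
  have n₀ := norm_sub_eq_add_of_dist_midpoint h₀ e₀
  have n₁ := norm_sub_eq_add_of_dist_midpoint h₁ e₁
  have hs₀ : v 1 - v 0 ≠ 0 := sub_ne_zero.mpr (hne 0)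
  have hs₁ : v 2 - v 1 ≠ 0 := sub_ne_zero.mpr (hne 1)
  have hc : (v 1 - v 0) - (v 4 - v 3) = -(v 5 - v 2) := by
    linear_combination (norm := module) -hb
  have ha : (v 2 - v 1) - (v 5 - v 4) = v 3 - v 0 := by
    linear_combination (norm := module) hb
  have hc₀ : v 5 - v 2 ≠ 0 := by
    rw [← norm_pos_iff, ← norm_neg, ← hc, n₀]
    exact add_pos_of_pos_of_nonneg (norm_pos_iff.mpr hs₀) (norm_nonneg _)
  have ha₀ : v 3 - v 0 ≠ 0 := by
    rw [← norm_pos_iff, ← ha, n₁]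
    exact add_pos_of_pos_of_nonneg (norm_pos_iff.mpr hs₁) (norm_nonneg _)
  have r₀ := sameRay_sub_of_norm_sub_eq_add n₀
  rw [hc, ← sameRay_neg_swap, neg_sub] at r₀
  have r₁ := sameRay_sub_of_norm_sub_eq_add n₁
  rw [ha] at r₁
  rw [EuclideanGeometry.angle, vsub_eq_sub, vsub_eq_sub,
    angle_eq_angle_of_sameRay r₀ r₁ (sub_ne_zero.mpr (hne 0).symm) hc₀ hs₁ ha₀]
  exact angle_eq_two_pi_div_three_of_two_inner_eq hc₀ ha₀ hca

theorem angle_eq_two_pi_div_three_of_dist_midpoint (v : Fin 6 → V) (hne : ∀ i, v (i + 1) ≠ v i)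
    (hmid : ∀ i : Fin 6,
      dist (midpoint ℝ (v i) (v (i + 1))) (midpoint ℝ (v (i + 3)) (v (i + 4)))
        = √3 / 2 * (dist (v i) (v (i + 1)) + dist (v (i + 3)) (v (i + 4)))) (i : Fin 6) :
    ∠ (v (i - 1)) (v i) (v (i + 1)) = 2 * π / 3 := by
  have hidx : 0 + (i - 1) = i - 1 ∧ 1 + (i - 1) = i ∧ 2 + (i - 1) = i + 1 := by
    revert i; decide
  have := angle_zero_one_two_eq_two_pi_div_three (fun j => v (j + (i - 1)))
    (fun j => by simpa only [add_right_comm j 1] using hne (j + (i - 1)))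
    (fun j => by simpa only [add_right_comm j _ (i - 1)] using hmid (j + (i - 1)))
  simpa only [hidx] using this

end

/-- IMO 2003 P3: In a convex hexagon `v 0 v 1 v 2 v 3 v 4 v 5`, if for each pair of
opposite sides the distance between their midpoints is `√3/2` times the sum of their
lengths, then the hexagon is equiangular (every interior angle equals `2π/3`).
Convexity (in the listed cyclic order) is encoded by: for every side, the remaining
vertices lie strictly on the same side of the line through that side. -/
theorem imo2003_p3 (v : Fin 6 → EuclideanSpace ℝ (Fin 2))
    (hconv : ∀ i j k : Fin 6, j ≠ i → j ≠ i + 1 → k ≠ i → k ≠ i + 1 →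
      (affineSpan ℝ {v i, v (i + 1)}).SSameSide (v j) (v k))
    (hmid : ∀ i : Fin 6,
      dist (midpoint ℝ (v i) (v (i + 1))) (midpoint ℝ (v (i + 3)) (v (i + 4)))
        = Real.sqrt 3 / 2 * (dist (v i) (v (i + 1)) + dist (v (i + 3)) (v (i + 4)))) :
    ∀ i : Fin 6, ∠ (v (i - 1)) (v i) (v (i + 1)) = 2 * π / 3 := by
  refine angle_eq_two_pi_div_three_of_dist_midpoint v (fun i h => ?_) hmid
  have hidx : i + 1 ≠ i - 1 ∧ i + 1 ≠ i - 1 + 1 := by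
    clear h; revert i; decide
  refine (hconv (i - 1) (i + 1) (i + 1) hidx.1 hidx.2 hidx.1 hidx.2).left_notMem ?_
  rw [h, sub_add_cancel]
  exact right_mem_affineSpan_pair ℝ _ _
end

section
/- Let ABCD be a cyclic quadrilateral, and let P, Q, R be the feet of the perpendiculars from D to lines BC, CA, AB respectively. If the internal bisectors of angles ∠ABC and ∠ADC meet on segment AC, then PQ = QR. -/
/-!
The feet `P` and `Q` of the perpendiculars from `D` to two lines through `C` satisfy
`PQ = DC · sin ∠BCA`, and likewise `QR = DA · sin ∠CAB`. By the law of sines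
`sin ∠BCA / sin ∠CAB = AB / CB`, so `PQ = QR` amounts to `AB · CD = CB · AD`. If the bisectors
from `B` and `D` meet `AC` at `X`, the angle bisector theorem gives `AB / CB = AX / XC = AD / CD`.
-/

open Module RealInnerProductSpace

variable {V : Type*} [NormedAddCommGroup V] [InnerProductSpace ℝ V]

theorem det_gram_fin_three_eq_zero [Fact (finrank ℝ V = 2)] (u v w : V) :
    (Matrix.gram ℝ ![u, v, w]).det = 0 := by
  have : FiniteDimensional ℝ V := .of_fact_finrank_eq_two
  by_contra h
  have := (Matrix.det_gram_ne_zero_iff_linearIndependent.1 h).fintype_card_le_finrank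
  simp [Fact.out (p := finrank ℝ V = 2)] at this

namespace InnerProductGeometry

theorem sin_angle_mul_norm_mul_norm_sq (u v : V) :
    (Real.sin (angle u v) * (‖u‖ * ‖v‖)) ^ 2 = (‖u‖ * ‖v‖) ^ 2 - ⟪u, v⟫ ^ 2 := by
  rw [← cos_angle_mul_norm_mul_norm]
  linear_combination (‖u‖ * ‖v‖) ^ 2 * Real.sin_sq_add_cos_sq (angle u v)

theorem norm_smul_sub_smul_eq_norm_mul_sin_angle [Fact (finrank ℝ V = 2)] {u v d : V} {t w : ℝ}
    (hu : u ≠ 0) (hv : v ≠ 0) (htu : ⟪d - t • u, u⟫ = 0) (hwv : ⟪d - w • v, v⟫ = 0) :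
    ‖t • u - w • v‖ = ‖d‖ * Real.sin (angle u v) := by
  have hgram := det_gram_fin_three_eq_zero u v d
  simp only [Matrix.det_fin_three, Matrix.gram_apply, Fin.isValue, Matrix.cons_val_zero,
    Matrix.cons_val_one, Matrix.cons_val, real_inner_self_eq_norm_sq, real_inner_comm u v,
    real_inner_comm d v, real_inner_comm d u] at hgram
  rw [inner_sub_left, real_inner_smul_left, real_inner_self_eq_norm_sq, sub_eq_zero] at htu hwv
  have hfeet : ‖t • u - w • v‖ ^ 2 * (‖u‖ * ‖v‖) ^ 2
      = ⟪d, u⟫ ^ 2 * ‖v‖ ^ 2 - 2 * ⟪d, u⟫ * ⟪d, v⟫ * ⟪u, v⟫ + ⟪d, v⟫ ^ 2 * ‖u‖ ^ 2 := by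
    rw [norm_sub_sq_real, norm_smul, norm_smul, real_inner_smul_left, real_inner_smul_right,
      Real.norm_eq_abs, Real.norm_eq_abs, mul_pow, mul_pow, sq_abs, sq_abs, htu, hwv]
    ring
  have hsq : ‖t • u - w • v‖ ^ 2 * (‖u‖ * ‖v‖) ^ 2
      = (‖d‖ * Real.sin (angle u v)) ^ 2 * (‖u‖ * ‖v‖) ^ 2 := by
    linear_combination hfeet - hgram - ‖d‖ ^ 2 * sin_angle_mul_norm_mul_norm_sq u v
  rw [← pow_left_inj₀ (norm_nonneg _) (by have := sin_angle_nonneg u v; positivity) two_ne_zero]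
  exact mul_right_cancel₀ (by positivity) hsq

theorem one_sub_mul_norm_eq_mul_norm_of_angle_eq {u v : V} {s : ℝ} (huv : ⟪u, v⟫ ≠ ‖u‖ * ‖v‖)
    (h : angle u (u + s • (v - u)) = angle (u + s • (v - u)) v) :
    (1 - s) * ‖u‖ = s * ‖v‖ := by
  set w := u + s • (v - u) with hw
  have hcos : ‖v‖ * ⟪u, w⟫ = ‖u‖ * ⟪w, v⟫ := by
    rw [← cos_angle_mul_norm_mul_norm, ← cos_angle_mul_norm_mul_norm, h]
    ring
  have huw : ⟪u, w⟫ = ‖u‖ ^ 2 + s * (⟪u, v⟫ - ‖u‖ ^ 2) := by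
    rw [hw, inner_add_right, real_inner_smul_right, inner_sub_right, real_inner_self_eq_norm_sq]
  have hwv : ⟪w, v⟫ = ⟪u, v⟫ + s * (‖v‖ ^ 2 - ⟪u, v⟫) := by
    rw [hw, inner_add_left, real_inner_smul_left, inner_sub_left, real_inner_self_eq_norm_sq]
  have hprod : (‖u‖ * ‖v‖ - ⟪u, v⟫) * ((1 - s) * ‖u‖ - s * ‖v‖) = 0 := by
    rw [huw, hwv] at hcos
    linear_combination hcos
  rcases mul_eq_zero.1 hprod with h' | h'
  · exact absurd (sub_eq_zero.1 h').symm huv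
  · exact sub_eq_zero.1 h'

end InnerProductGeometry

theorem Collinear.exists_vsub_eq_smul_vsub {k W Pt : Type*} [DivisionRing k] [AddCommGroup W]
    [Module k W] [AddTorsor W Pt] {s : Set Pt} (h : Collinear k s) {X Y P : Pt} (hX : X ∈ s)
    (hY : Y ∈ s) (hP : P ∈ s) (hXY : X ≠ Y) : ∃ t : k, P -ᵥ Y = t • (X -ᵥ Y) := by
  obtain ⟨t, rfl⟩ :=
    mem_affineSpan_pair_iff_exists_lineMap_eq.1 (h.mem_affineSpan_of_mem_of_ne hY hX hP hXY.symm)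
  exact ⟨t, AffineMap.lineMap_vsub_left Y X t⟩

namespace EuclideanGeometry

variable {Pt : Type*} [MetricSpace Pt] [NormedAddTorsor V Pt]

theorem dist_eq_dist_mul_sin_angle_of_inner_eq_zero [Fact (finrank ℝ V = 2)] {D X Y Z P Q : Pt}
    (hXY : X ≠ Y) (hZY : Z ≠ Y) (hP : Collinear ℝ {X, Y, P}) (hDP : ⟪D -ᵥ P, X -ᵥ Y⟫ = 0)
    (hQ : Collinear ℝ {Y, Z, Q}) (hDQ : ⟪D -ᵥ Q, Y -ᵥ Z⟫ = 0) :
    dist P Q = dist D Y * Real.sin (∠ X Y Z) := by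
  obtain ⟨t, ht⟩ := hP.exists_vsub_eq_smul_vsub (X := X) (Y := Y) (P := P) (by simp) (by simp)
    (by simp) hXY
  obtain ⟨w, hw⟩ := hQ.exists_vsub_eq_smul_vsub (X := Z) (Y := Y) (P := Q) (by simp) (by simp)
    (by simp) hZY
  rw [dist_eq_norm_vsub V, dist_eq_norm_vsub V, ← vsub_sub_vsub_cancel_right P Q Y, ht, hw]
  apply InnerProductGeometry.norm_smul_sub_smul_eq_norm_mul_sin_angle (vsub_ne_zero.2 hXY)
    (vsub_ne_zero.2 hZY)
  · rwa [← ht, vsub_sub_vsub_cancel_right]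
  · rw [← hw, vsub_sub_vsub_cancel_right, ← neg_vsub_eq_vsub_rev Y Z, inner_neg_right, hDQ,
      neg_zero]

theorem dist_mul_dist_eq_of_angle_eq {A B C X : Pt} (h : ¬Collinear ℝ {A, B, C})
    (hX : X ∈ line[ℝ, A, C]) (hangle : ∠ A B X = ∠ X B C) :
    dist A B * dist X C = dist C B * dist A X := by
  obtain ⟨s, rfl⟩ := mem_affineSpan_pair_iff_exists_lineMap_eq.1 hX
  have hvec : AffineMap.lineMap A C s -ᵥ B = (A -ᵥ B) + s • ((C -ᵥ B) - (A -ᵥ B)) := by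
    rw [AffineMap.lineMap_apply, vsub_sub_vsub_cancel_right, vadd_vsub_assoc, add_comm]
  have hne : ⟪A -ᵥ B, C -ᵥ B⟫ ≠ ‖A -ᵥ B‖ * ‖C -ᵥ B‖ := by
    rw [Ne, InnerProductGeometry.inner_eq_mul_norm_iff_angle_eq_zero
      (vsub_ne_zero.2 (ne₁₂_of_not_collinear h)) (vsub_ne_zero.2 (ne₂₃_of_not_collinear h).symm)]
    exact (angle_pos_of_not_collinear h).ne'
  have hs := congrArg abs <|
    InnerProductGeometry.one_sub_mul_norm_eq_mul_norm_of_angle_eq hne (by rwa [← hvec])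
  rw [abs_mul, abs_mul, abs_norm, abs_norm] at hs
  rw [dist_left_lineMap, dist_lineMap_right, dist_eq_norm_vsub V A B, dist_eq_norm_vsub V C B,
    Real.norm_eq_abs, Real.norm_eq_abs]
  linear_combination dist A C * hs

theorem dist_mul_dist_eq_of_angle_bisectors_meet {A B C D X : Pt} (hABC : ¬Collinear ℝ {A, B, C})
    (hADC : ¬Collinear ℝ {A, D, C}) (hX : X ∈ line[ℝ, A, C]) (hB : ∠ A B X = ∠ X B C)
    (hD : ∠ A D X = ∠ X D C) :
    dist A B * dist C D = dist C B * dist A D := by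
  have hbisB := dist_mul_dist_eq_of_angle_eq hABC hX hB
  have hbisD := dist_mul_dist_eq_of_angle_eq hADC hX hD
  have hXC : dist X C ≠ 0 := by
    rw [dist_ne_zero]
    rintro rfl
    simp [(ne₂₃_of_not_collinear hABC).symm, ne₁₃_of_not_collinear hABC] at hbisB
  apply mul_right_cancel₀ hXC
  linear_combination dist C D * hbisB - dist C B * hbisD

end EuclideanGeometry

open EuclideanGeometry

theorem imo2003_p4_general (A B C D P Q R : EuclideanSpace ℝ (Fin 2))
    (hconvBC : (affineSpan ℝ {B, C}).SSameSide D A)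
    (hconvCD : (affineSpan ℝ {C, D}).SSameSide A B)
    (hP : Collinear ℝ {B, C, P} ∧ inner ℝ (D - P) (B - C) = (0 : ℝ))
    (hQ : Collinear ℝ {C, A, Q} ∧ inner ℝ (D - Q) (C - A) = (0 : ℝ))
    (hR : Collinear ℝ {A, B, R} ∧ inner ℝ (D - R) (A - B) = (0 : ℝ))
    (hbis : ∃ X ∈ segment ℝ A C, ∠ A B X = ∠ X B C ∧ ∠ A D X = ∠ X D C) :
    dist P Q = dist Q R := by
  have : Fact (finrank ℝ (EuclideanSpace ℝ (Fin 2)) = 2) := ⟨finrank_euclideanSpace_fin⟩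
  have hBC : B ≠ C := fun h => hconvCD.right_notMem (h ▸ left_mem_affineSpan_pair ℝ C D)
  have hCD : C ≠ D := fun h => hconvBC.left_notMem (h ▸ right_mem_affineSpan_pair ℝ B C)
  have hABC : ¬Collinear ℝ {A, B, C} := fun h =>
    hconvBC.right_notMem (h.mem_affineSpan_of_mem_of_ne (by simp) (by simp) (by simp) hBC)
  have hADC : ¬Collinear ℝ {A, D, C} := fun h =>
    hconvCD.left_notMem (h.mem_affineSpan_of_mem_of_ne (by simp) (by simp) (by simp) hCD)
  obtain ⟨X, hX, hB, hD⟩ := hbis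
  have hratio := dist_mul_dist_eq_of_angle_bisectors_meet hABC hADC
    (mem_segment_iff_wbtw.1 hX).mem_affineSpan hB hD
  have hPQ : dist P Q = dist D C * Real.sin (∠ B C A) :=
    dist_eq_dist_mul_sin_angle_of_inner_eq_zero hBC (ne₁₃_of_not_collinear hABC) hP.1 hP.2
      hQ.1 hQ.2
  have hQR : dist Q R = dist D A * Real.sin (∠ C A B) :=
    dist_eq_dist_mul_sin_angle_of_inner_eq_zero (ne₁₃_of_not_collinear hABC).symm
      (ne₁₂_of_not_collinear hABC).symm hQ.1 hQ.2 hR.1 hR.2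
  have hsin := law_sin A C B
  rw [angle_comm A C B, angle_comm B A C, dist_comm B A] at hsin
  rw [hPQ, hQR, dist_comm D C, dist_comm D A]
  apply mul_right_cancel₀ (dist_ne_zero.2 hBC.symm)
  linear_combination dist C D * hsin + Real.sin (∠ C A B) * hratio

/-- IMO 2003 P4 (one direction): `ABCD` is a convex cyclic quadrilateral; `P`, `Q`, `R`
are the feet of the perpendiculars from `D` to lines `BC`, `CA`, `AB`.  If the internal
bisectors of `∠ABC` and `∠ADC` meet at a point of segment `AC`, then `PQ = QR`. -/
theorem imo2003_p4 (A B C D P Q R : EuclideanSpace ℝ (Fin 2))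
    (hcyc : Cospherical ({A, B, C, D} : Set (EuclideanSpace ℝ (Fin 2))))
    (hconvAB : (affineSpan ℝ {A, B}).SSameSide C D)
    (hconvBC : (affineSpan ℝ {B, C}).SSameSide D A)
    (hconvCD : (affineSpan ℝ {C, D}).SSameSide A B)
    (hconvDA : (affineSpan ℝ {D, A}).SSameSide B C)
    (hP : Collinear ℝ {B, C, P} ∧ inner ℝ (D - P) (B - C) = (0 : ℝ))
    (hQ : Collinear ℝ {C, A, Q} ∧ inner ℝ (D - Q) (C - A) = (0 : ℝ))
    (hR : Collinear ℝ {A, B, R} ∧ inner ℝ (D - R) (A - B) = (0 : ℝ))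
    (hbis : ∃ X ∈ segment ℝ A C, ∠ A B X = ∠ X B C ∧ ∠ A D X = ∠ X D C) :
    dist P Q = dist Q R :=
  imo2003_p4_general A B C D P Q R hconvBC hconvCD hP hQ hR hbis
end

section
/- Let ABC be a triangle with incenter I, and let P be a point in the interior of the triangle satisfying ∠PBA + ∠PCA = ∠PBC + ∠PCB. Then AP ≥ AI, with equality if and only if P = I. -/
/-!
The angle condition says `∠PBC + ∠PCB = (∠B + ∠C) / 2`, so `∠BPC = ∠BIC`: `P` lies on the circle
through `B`, `I`, `C`. Its centre `M` lies on the ray `AI` beyond `I`, hence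
`AP ≥ AM - MP = AM - MI = AI`, with equality only when `P` lies on the segment `AM`, i.e. `P = I`.
The angle chase uses oriented angles modulo `π`, with the plane oriented so that `ABC` is
positively oriented.
-/

open EuclideanGeometry Real

namespace Imo2006P1

section Affine

variable {V P : Type*} [AddCommGroup V] [Module ℝ V] [AddTorsor V P]

theorem wbtw_of_collinear_of_lt (f : P →ᵃ[ℝ] ℝ) {A I M : P} (h : Collinear ℝ {A, I, M})
    (hMI : f M < f I) (hIA : f I < f A) : Wbtw ℝ A I M := by
  rcases h.wbtw_or_wbtw_or_wbtw with h | h | h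
  · exact h
  · exact absurd ((wbtw_iff_of_le hIA.le).1 (h.map f)).1 hMI.not_ge
  · exact absurd ((wbtw_iff_of_le hMI.le).1 (h.map f)).2 hIA.not_ge

theorem sSameSide_affineSpan_image_compl_iff {n : ℕ} [NeZero n] (b : AffineBasis (Fin (n + 1)) ℝ P)
    (i : Fin (n + 1)) (X : P) :
    (affineSpan ℝ (b '' {i}ᶜ)).SSameSide X (b i) ↔ 0 < b.coord i X := by
  let s : Affine.Simplex ℝ P n := ⟨b, b.ind⟩
  have h :=
    s.sSameSide_affineSpan_faceOpposite_point_right_iff (i := i) (b.sum_coord_apply_eq_one X)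
  rwa [s.range_faceOpposite_points, b.affineCombination_coord_eq_self X] at h

end Affine

section Triangle

variable {V : Type*} [NormedAddCommGroup V] [InnerProductSpace ℝ V]
  [Fact (Module.finrank ℝ V = 2)] {A B C : V}

theorem exists_affineBasis_of_not_collinear (h : ¬Collinear ℝ {A, B, C}) :
    ∃ b : AffineBasis (Fin 3) ℝ V, b 0 = A ∧ b '' {0}ᶜ = {B, C} ∧
      interior (convexHull ℝ {A, B, C}) = {X | ∀ i, 0 < b.coord i X} := by
  have hind := affineIndependent_iff_not_collinear_set.2 h
  have := FiniteDimensional.of_fact_finrank_eq_two (K := ℝ) (V := V)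
  have htop : affineSpan ℝ (Set.range ![A, B, C]) = ⊤ := by
    rw [hind.affineSpan_eq_top_iff_card_eq_finrank_add_one, Fact.out (p := Module.finrank ℝ V = 2)]
    rfl
  let b : AffineBasis (Fin 3) ℝ V := ⟨![A, B, C], hind, htop⟩
  have hb : ⇑b = ![A, B, C] := rfl
  have hrange : Set.range b = {A, B, C} := by ext; simp [hb, eq_comm]; tauto
  refine ⟨b, rfl, by ext; simp [hb, Fin.exists_fin_succ, eq_comm], ?_⟩
  rw [← hrange, b.interior_convexHull]

theorem sSameSide_of_mem_interior_convexHull (h : ¬Collinear ℝ {A, B, C}) {X : V}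
    (hX : X ∈ interior (convexHull ℝ {A, B, C})) : line[ℝ, B, C].SSameSide X A := by
  obtain ⟨b, hA, hface, hint⟩ := exists_affineBasis_of_not_collinear h
  rw [hint] at hX
  have := (sSameSide_affineSpan_image_compl_iff b 0 X).2 (hX 0)
  rwa [hface, hA] at this

theorem wbtw_of_mem_interior_convexHull (h : ¬Collinear ℝ {A, B, C}) {I M : V}
    (hI : I ∈ interior (convexHull ℝ {A, B, C})) (hM : ¬line[ℝ, B, C].SSameSide M A)
    (hAIM : Collinear ℝ {A, I, M}) : Wbtw ℝ A I M := by
  obtain ⟨b, hA, hface, hint⟩ := exists_affineBasis_of_not_collinear h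
  rw [hint] at hI
  -- The barycentric coordinate at `A` is `1` at `A`, in `(0, 1)` at `I` and `≤ 0` at `M`.
  have hA1 : b.coord 0 A = 1 := hA ▸ b.coord_apply_eq 0
  have hsum := b.sum_coord_apply_eq_one I
  rw [Fin.sum_univ_three] at hsum
  have hM0 : b.coord 0 M ≤ 0 := by
    rwa [← not_lt, ← sSameSide_affineSpan_image_compl_iff, hface, hA]
  refine wbtw_of_collinear_of_lt (b.coord 0) hAIM (hM0.trans_lt (hI 0)) ?_
  linarith [hI 1, hI 2]

end Triangle

section Angles

variable {V P : Type*} [NormedAddCommGroup V] [InnerProductSpace ℝ V] [MetricSpace P]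
  [NormedAddTorsor V P]

theorem dist_le_dist_of_wbtw_center {S : Sphere P} {A I X : P} (hI : I ∈ S) (hX : X ∈ S)
    (h : Wbtw ℝ A I S.center) : dist A I ≤ dist A X ∧ (dist A X = dist A I ↔ X = I) := by
  have hIX : dist I S.center = dist X S.center := by rw [mem_sphere.1 hI, mem_sphere.1 hX]
  have hsum : dist A I + dist I S.center = dist A S.center := h.dist_add_dist
  refine ⟨by linarith [dist_triangle A X S.center], fun hAX => ?_, fun hXI => hXI ▸ rfl⟩
  obtain ⟨t, ht, rfl⟩ := h
  rw [dist_left_lineMap, Real.norm_eq_abs, abs_of_nonneg ht.1] at hAX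
  rw [dist_lineMap_right, Real.norm_eq_abs, abs_of_nonneg (sub_nonneg.2 ht.2)] at hIX
  exact eq_lineMap_of_dist_eq_mul_of_dist_eq_mul hAX hIX.symm

variable [Fact (Module.finrank ℝ V = 2)] [Module.Oriented ℝ V (Fin 2)]

theorem oangle_sign_eq_of_sSameSide {p₁ p₂ p₃ p₄ : P} (h : line[ℝ, p₁, p₂].SSameSide p₃ p₄) :
    (∡ p₁ p₂ p₃).sign = (∡ p₁ p₂ p₄).sign := by
  have h' := h.oangle_sign_eq (left_mem_affineSpan_pair ℝ p₁ p₂) (right_mem_affineSpan_pair ℝ p₁ p₂)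
  rw [← oangle_rotate_sign p₁, ← oangle_rotate_sign p₁, ← oangle_swap₁₃_sign p₁ p₃,
    ← oangle_swap₁₃_sign p₁ p₄, h']

theorem two_zsmul_oangle_eq_of_angle_eq {A B C X : P} (hA : (∡ A B X).sign = 1)
    (hC : (∡ X B C).sign = 1) (h : ∠ A B X = ∠ X B C) :
    (2 : ℤ) • ∡ A B X = ∡ A B C ∧ (2 : ℤ) • ∡ X B C = ∡ A B C := by
  have hbis : ∡ A B X = ∡ X B C := oangle_eq_of_angle_eq_of_sign_eq h (hA.trans hC.symm)
  have hadd : ∡ A B X + ∡ X B C = ∡ A B C := oangle_add (left_ne_of_oangle_sign_eq_one hA)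
    (right_ne_of_oangle_sign_eq_one hA) (right_ne_of_oangle_sign_eq_one hC)
  rw [two_zsmul, two_zsmul]
  exact ⟨by rwa [← hbis] at hadd, by rwa [hbis] at hadd⟩

theorem two_zsmul_oangle_eq_of_angle_add_angle_eq {A B C X : P} (hB : (∡ A B X).sign = 1)
    (hC : (∡ B C X).sign = 1) (hA : (∡ C A X).sign = 1)
    (h : ∠ X B A + ∠ X C A = ∠ X B C + ∠ X C B) : (2 : ℤ) • ∡ B X C = ∡ A B C + ∡ B C A := by
  have hB' : (∡ X B C).sign = 1 := by rwa [← oangle_rotate_sign]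
  have hC' : (∡ X C A).sign = 1 := by rwa [← oangle_rotate_sign]
  have hXB := right_ne_of_oangle_sign_eq_one hB
  have hXC := right_ne_of_oangle_sign_eq_one hC
  have hCB := right_ne_of_oangle_sign_eq_one hB'
  have hsplitB : ∡ A B X + ∡ X B C = ∡ A B C :=
    oangle_add (left_ne_of_oangle_sign_eq_one hB) hXB hCB
  have hsplitC : ∡ B C X + ∡ X C A = ∡ B C A :=
    oangle_add (left_ne_of_oangle_sign_eq_one hC) hXC (right_ne_of_oangle_sign_eq_one hC')
  have hsum : ∡ A B X + ∡ X C A = ∡ X B C + ∡ B C X := by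
    rw [oangle_eq_angle_of_sign_eq_one hB, oangle_eq_angle_of_sign_eq_one hC',
      oangle_eq_angle_of_sign_eq_one hB', oangle_eq_angle_of_sign_eq_one hC, angle_comm A B X,
      angle_comm B C X, ← Real.Angle.coe_add, ← Real.Angle.coe_add, h]
  have htri : ∡ X B C + ∡ B C X + ∡ C X B = π :=
    oangle_add_oangle_add_oangle_eq_pi hXB.symm hCB hXC
  have hBXC : ∡ B X C = ∡ X B C + ∡ B C X - π := by
    rw [← htri, oangle_rev C X B]; abel
  rw [hBXC, smul_sub, Real.Angle.two_zsmul_coe_pi, sub_zero, ← hsplitB, ← hsplitC]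
  linear_combination (norm := abel) -hsum

theorem two_zsmul_oangle_center_eq {A B C I : P} {S : Sphere P} (hB : B ∈ S) (hI : I ∈ S)
    (hC : C ∈ S) (hIB : I ≠ B) (hIC : I ≠ C) (hCB : C ≠ B) (hAI : A ≠ I) (hAB : A ≠ B) :
    (2 : ℤ) • ∡ A I S.center =
      (2 : ℤ) • ∡ A B I + (2 : ℤ) • ∡ I A B + (2 : ℤ) • ∡ B C I + π := by
  have hcenter : (2 : ℤ) • ∡ B I S.center + (2 : ℤ) • ∡ I C B = π :=
    Sphere.two_zsmul_oangle_center_add_two_zsmul_oangle_eq_pi hI hC hB hIC.symm hCB hIB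
  have hMI : S.center ≠ I := by
    rintro hM
    rw [← hM, mem_sphere, dist_self] at hI
    rw [mem_sphere, ← hI, dist_eq_zero] at hB
    exact hIB (hB.trans hM).symm
  have hsplit : ∡ A I B + ∡ B I S.center = ∡ A I S.center := oangle_add hAI hIB.symm hMI
  have htri : ∡ A I B + ∡ I B A + ∡ B A I = π :=
    oangle_add_oangle_add_oangle_eq_pi hAI.symm hIB.symm hAB
  have hAIB : ∡ A I B = π + ∡ A B I + ∡ I A B := by
    rw [← htri, oangle_rev A B I, oangle_rev I A B]; abel
  have hBIM : (2 : ℤ) • ∡ B I S.center = π + (2 : ℤ) • ∡ B C I := by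
    rw [← hcenter, oangle_rev B C I]; abel
  rw [← hsplit, smul_add, hAIB, hBIM, smul_add, smul_add, Real.Angle.two_zsmul_coe_pi]
  abel

end Angles

section Incenter

variable {V : Type*} [NormedAddCommGroup V] [InnerProductSpace ℝ V]
  [Fact (Module.finrank ℝ V = 2)] [Module.Oriented ℝ V (Fin 2)] {A B C I : V}

theorem oangle_sign_eq_one_of_mem_interior_convexHull (h : ¬Collinear ℝ {A, B, C})
    (hABC : (∡ A B C).sign = 1) {X : V} (hX : X ∈ interior (convexHull ℝ {A, B, C})) :
    (∡ A B X).sign = 1 ∧ (∡ B C X).sign = 1 ∧ (∡ C A X).sign = 1 := by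
  have hBCA : ({B, C, A} : Set V) = {A, B, C} := by rw [Set.pair_comm C A, Set.insert_comm]
  have hCAB : ({C, A, B} : Set V) = {A, B, C} := by rw [Set.insert_comm, Set.pair_comm C B]
  have hBCA' : (∡ B C A).sign = 1 := by rwa [oangle_rotate_sign]
  have hCAB' : (∡ C A B).sign = 1 := by rwa [oangle_rotate_sign]
  refine ⟨?_, ?_, ?_⟩
  · rw [← hABC]
    exact oangle_sign_eq_of_sSameSide
      (sSameSide_of_mem_interior_convexHull (hCAB ▸ h) (hCAB ▸ hX))
  · rw [← hBCA']
    exact oangle_sign_eq_of_sSameSide (sSameSide_of_mem_interior_convexHull h hX)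
  · rw [← hCAB']
    exact oangle_sign_eq_of_sSameSide
      (sSameSide_of_mem_interior_convexHull (hBCA ▸ h) (hBCA ▸ hX))

theorem wbtw_center_of_mem_sphere (h : ¬Collinear ℝ {A, B, C}) (hABC : (∡ A B C).sign = 1)
    (hIin : I ∈ interior (convexHull ℝ {A, B, C}))
    (hIA : ∠ B A I = ∠ I A C) (hIB : ∠ A B I = ∠ I B C) (hIC : ∠ B C I = ∠ I C A)
    {S : Sphere V} (hB : B ∈ S) (hI : I ∈ S) (hC : C ∈ S) : Wbtw ℝ A I S.center := by
  obtain ⟨hB₁, hC₁, hA₁⟩ := oangle_sign_eq_one_of_mem_interior_convexHull h hABC hIin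
  have hB₂ : (∡ I B C).sign = 1 := by rwa [← oangle_rotate_sign]
  have hC₂ : (∡ I C A).sign = 1 := by rwa [← oangle_rotate_sign]
  have hA₂ : (∡ I A B).sign = 1 := by rwa [← oangle_rotate_sign]
  have hβ := (two_zsmul_oangle_eq_of_angle_eq hB₁ hB₂ hIB).1
  have hγ := (two_zsmul_oangle_eq_of_angle_eq hC₁ hC₂ hIC).1
  have hα := (two_zsmul_oangle_eq_of_angle_eq hA₁ hA₂ (by rw [angle_comm, ← hIA, angle_comm])).2
  have hIB' := right_ne_of_oangle_sign_eq_one hB₁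
  have hIC' := right_ne_of_oangle_sign_eq_one hC₁
  have hCB := right_ne_of_oangle_sign_eq_one hABC
  have hAB := left_ne_of_oangle_sign_eq_one hABC
  have htri : ∡ A B C + ∡ B C A + ∡ C A B = π :=
    oangle_add_oangle_add_oangle_eq_pi hAB.symm hCB (left_ne_of_oangle_sign_eq_one hA₁).symm
  have hcol : Collinear ℝ {A, I, S.center} := by
    rw [← oangle_sign_eq_zero_iff_collinear, Real.Angle.sign_eq_zero_iff,
      ← Real.Angle.two_zsmul_eq_zero_iff, two_zsmul_oangle_center_eq hB hI hC hIB' hIC' hCB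
        (left_ne_of_oangle_sign_eq_one hA₂).symm hAB, hβ, hα, hγ,
      show ∡ A B C + ∡ C A B + ∡ B C A = π by rw [← htri]; abel, ← two_zsmul,
      Real.Angle.two_zsmul_coe_pi]
  -- `∡ B M C = 2 • ∡ B I C = π - ∡ C A B` has the orientation of `ABC`, unlike `∡ B A C`.
  have hside : ¬line[ℝ, B, C].SSameSide S.center A := by
    intro hs
    have hsign := hs.oangle_sign_eq (left_mem_affineSpan_pair ℝ B C)
      (right_mem_affineSpan_pair ℝ B C)
    rw [← oangle_swap₁₃_sign, Sphere.oangle_center_eq_two_zsmul_oangle hB hI hC hIB' hIC',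
      two_zsmul_oangle_eq_of_angle_add_angle_eq hB₁ hC₁ hA₁
        (by rw [angle_comm I B A, hIB, ← hIC, angle_comm B C I]),
      show ∡ A B C + ∡ B C A = π - ∡ C A B by rw [← htri]; abel, Real.Angle.sign_pi_sub,
      oangle_rotate_sign, oangle_rotate_sign, hABC] at hsign
    exact absurd hsign (by decide)
  exact wbtw_of_mem_interior_convexHull h hIin hside hcol

theorem dist_le_dist_of_oangle_sign_eq_one (h : ¬Collinear ℝ {A, B, C})
    (hABC : (∡ A B C).sign = 1) {P : V} (hIin : I ∈ interior (convexHull ℝ {A, B, C}))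
    (hIA : ∠ B A I = ∠ I A C) (hIB : ∠ A B I = ∠ I B C) (hIC : ∠ B C I = ∠ I C A)
    (hPin : P ∈ interior (convexHull ℝ {A, B, C}))
    (hang : ∠ P B A + ∠ P C A = ∠ P B C + ∠ P C B) :
    dist A I ≤ dist A P ∧ (dist A P = dist A I ↔ P = I) := by
  obtain ⟨hIB₁, hIC₁, hIA₁⟩ := oangle_sign_eq_one_of_mem_interior_convexHull h hABC hIin
  obtain ⟨hPB₁, hPC₁, hPA₁⟩ := oangle_sign_eq_one_of_mem_interior_convexHull h hABC hPin
  have hBIC := two_zsmul_oangle_eq_of_angle_add_angle_eq hIB₁ hIC₁ hIA₁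
    (by rw [angle_comm I B A, hIB, ← hIC, angle_comm B C I])
  have hBPC := two_zsmul_oangle_eq_of_angle_add_angle_eq hPB₁ hPC₁ hPA₁ hang
  have hBIC' : ¬Collinear ℝ {B, I, C} := by
    rw [Set.insert_comm, ← oangle_sign_eq_zero_iff_collinear, ← oangle_rotate_sign, hIC₁]
    decide
  obtain ⟨S, hS⟩ := cospherical_iff_exists_sphere.1
    (cospherical_of_two_zsmul_oangle_eq_of_not_collinear (hBIC.trans hBPC.symm) hBIC')
  obtain ⟨hB, hI, hP, hC⟩ : B ∈ S ∧ I ∈ S ∧ P ∈ S ∧ C ∈ S := by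
    simpa only [Set.insert_subset_iff, Set.singleton_subset_iff, Sphere.mem_coe] using hS
  exact dist_le_dist_of_wbtw_center hI hP
    (wbtw_center_of_mem_sphere h hABC hIin hIA hIB hIC hB hI hC)

end Incenter

theorem exists_oriented_oangle_sign_eq_one {V : Type*} [NormedAddCommGroup V]
    [InnerProductSpace ℝ V] [Fact (Module.finrank ℝ V = 2)] {A B C : V}
    (h : ¬Collinear ℝ {A, B, C}) : ∃ _ : Module.Oriented ℝ V (Fin 2), (∡ A B C).sign = 1 := by
  have := FiniteDimensional.of_fact_finrank_eq_two (K := ℝ) (V := V)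
  let o : Orientation ℝ V (Fin 2) := (Module.finBasisOfFinrankEq ℝ V Fact.out).orientation
  let _ : Module.Oriented ℝ V (Fin 2) := ⟨o⟩
  have h0 : (∡ A B C).sign ≠ 0 := by rwa [Ne, oangle_sign_eq_zero_iff_collinear]
  rcases hs : (∡ A B C).sign
  · exact absurd hs h0
  · refine ⟨⟨-o⟩, ?_⟩
    change ((-o).oangle (A -ᵥ B) (C -ᵥ B)).sign = 1
    rw [o.oangle_neg_orientation_eq_neg, Real.Angle.sign_neg]
    change -(∡ A B C).sign = 1
    rw [hs]; rfl
  · exact ⟨_, hs⟩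

end Imo2006P1

open EuclideanGeometry

/-- IMO 2006 P1: `I` is the incenter of triangle `ABC` (characterized as the interior
point on all three internal angle bisectors) and `P` is an interior point with
`∠PBA + ∠PCA = ∠PBC + ∠PCB`.  Then `AP ≥ AI`, with equality iff `P = I`. -/
theorem imo2006_p1 (A B C I P : EuclideanSpace ℝ (Fin 2))
    (hABC : AffineIndependent ℝ ![A, B, C])
    (hIin : I ∈ interior (convexHull ℝ ({A, B, C} : Set (EuclideanSpace ℝ (Fin 2)))))
    (hIA : ∠ B A I = ∠ I A C) (hIB : ∠ A B I = ∠ I B C) (hIC : ∠ B C I = ∠ I C A)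
    (hPin : P ∈ interior (convexHull ℝ ({A, B, C} : Set (EuclideanSpace ℝ (Fin 2)))))
    (hang : ∠ P B A + ∠ P C A = ∠ P B C + ∠ P C B) :
    dist A I ≤ dist A P ∧ (dist A P = dist A I ↔ P = I) := by
  have : Fact (Module.finrank ℝ (EuclideanSpace ℝ (Fin 2)) = 2) := ⟨finrank_euclideanSpace_fin⟩
  have h := affineIndependent_iff_not_collinear_set.1 hABC
  obtain ⟨_, hor⟩ := Imo2006P1.exists_oriented_oangle_sign_eq_one h
  exact Imo2006P1.dist_le_dist_of_oangle_sign_eq_one h hor hIin hIA hIB hIC hPin hang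
end

section
/- If points T and K inside a convex quadrilateral ABCD satisfy ∠TAB = ∠KAD, ∠TBA = ∠KBC, ∠TCB = ∠KCD, and ∠TDC = ∠KDA, then the reflections of T over the four side-lines AB, BC, CD, DA are concyclic with center K. -/
open EuclideanGeometry


section Aux
variable {V : Type*} [NormedAddCommGroup V] [InnerProductSpace ℝ V]
  [Fact (Module.finrank ℝ V = 2)] [Module.Oriented ℝ V (Fin 2)]

local notation "o" => (positiveOrientation : Orientation ℝ V (Fin 2))
local notation "⟪" x ", " y "⟫" => @inner ℝ V _ x y

lemma refl_vec {u v v' : V} (h1 : v + v' ∈ (Submodule.span ℝ {u})) (h2 : ⟪v' - v, u⟫ = 0) :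
    ‖v'‖ = ‖v‖ ∧ o.oangle u v' = -o.oangle u v := by
  obtain ⟨r, hr⟩ := Submodule.mem_span_singleton.1 h1
  have h3 : ⟪v + v', v' - v⟫ = 0 := by
    rw [← hr, real_inner_smul_left, real_inner_comm, h2, mul_zero]
  have hnorm : ‖v'‖ = ‖v‖ := by
    have hx : ‖v'‖ ^ 2 = ‖v‖ ^ 2 := by
      have e : ⟪v + v', v' - v⟫ = ‖v'‖ ^ 2 - ‖v‖ ^ 2 := by
        simp only [inner_add_left, inner_sub_right, real_inner_self_eq_norm_sq]
        rw [real_inner_comm v v']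
        ring
      linarith [e ▸ h3]
    calc ‖v'‖ = √(‖v'‖ ^ 2) := (Real.sqrt_sq (norm_nonneg _)).symm
    _ = √(‖v‖ ^ 2) := by rw [hx]
    _ = ‖v‖ := Real.sqrt_sq (norm_nonneg _)
  refine ⟨hnorm, ?_⟩
  have hi : ⟪u, v'⟫ = ⟪u, v⟫ := by
    have h4 := inner_sub_left (𝕜 := ℝ) v' v u
    rw [h2] at h4
    have c1 := real_inner_comm u v'
    have c2 := real_inner_comm u v
    linarith
  have ha : o.areaForm u v' = -o.areaForm u v := by
    have : o.areaForm u (v + v') = 0 := by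
      rw [← hr]
      simp [o.areaForm_apply_self]
    rw [map_add] at this
    linarith
  have hk : o.kahler u v' = (starRingEnd ℂ) (o.kahler u v) := by
    rw [o.kahler_apply_apply, o.kahler_apply_apply, hi, ha]
    apply Complex.ext <;> simp
  show (Complex.arg (o.kahler u v') : Real.Angle) = -(Complex.arg (o.kahler u v) : Real.Angle)
  rw [hk, Complex.arg_conj_coe_angle]

end Aux

section Aux2
variable {V : Type*} [NormedAddCommGroup V] [InnerProductSpace ℝ V]
  [Fact (Module.finrank ℝ V = 2)] [Module.Oriented ℝ V (Fin 2)]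

local notation "o" => (positiveOrientation : Orientation ℝ V (Fin 2))
local notation "⟪" x ", " y "⟫" => @inner ℝ V _ x y

lemma refl_pt {A B T T' : V} (hm : midpoint ℝ T T' ∈ line[ℝ, A, B])
    (hperp : ⟪T' - T, B - A⟫ = 0) :
    (dist A T' = dist A T ∧ dist B T' = dist B T) ∧
      (∡ B A T' = -∡ B A T ∧ ∡ A B T' = -∡ A B T) := by
  have hmem : ∀ P, P ∈ line[ℝ, A, B] → (T - P) + (T' - P) ∈ Submodule.span ℝ {B - A} := by
    intro P hP
    have h1 : (T - P) + (T' - P) = (2:ℝ) • (midpoint ℝ T T' - P) := by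
      rw [midpoint_eq_smul_add, invOf_eq_inv]
      module
    rw [h1]
    apply Submodule.smul_mem
    have h2 := AffineSubspace.vsub_mem_direction hm hP
    rwa [direction_affineSpan, vectorSpan_pair_rev, vsub_eq_sub, vsub_eq_sub] at h2
  have hspan : Submodule.span ℝ {B - A} = Submodule.span ℝ ({A - B} : Set V) := by
    rw [show A - B = -(B - A) by abel, ← Set.neg_singleton, Submodule.span_neg]
  have RA := refl_vec (u := B - A) (v := T - A) (v' := T' - A)
    (hmem A (left_mem_affineSpan_pair ℝ A B))
    (by rw [show (T' - A) - (T - A) = T' - T by abel]; exact hperp)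
  have RB := refl_vec (u := A - B) (v := T - B) (v' := T' - B)
    (hspan ▸ hmem B (right_mem_affineSpan_pair ℝ A B))
    (by rw [show (T' - B) - (T - B) = T' - T by abel, show A - B = -(B - A) by abel,
      inner_neg_right, hperp, neg_zero])
  refine ⟨⟨?_, ?_⟩, ?_, ?_⟩
  · rw [dist_eq_norm', dist_eq_norm']; exact RA.1
  · rw [dist_eq_norm', dist_eq_norm']; exact RB.1
  · simpa only [EuclideanGeometry.oangle, vsub_eq_sub] using RA.2
  · simpa only [EuclideanGeometry.oangle, vsub_eq_sub] using RB.2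

end Aux2

section Aux3
variable {V : Type*} [NormedAddCommGroup V] [InnerProductSpace ℝ V]
  [Fact (Module.finrank ℝ V = 2)] [Module.Oriented ℝ V (Fin 2)]

local notation "o" => (positiveOrientation : Orientation ℝ V (Fin 2))
local notation "⟪" x ", " y "⟫" => @inner ℝ V _ x y

lemma ker_J {u : V} (hu : u ≠ 0) (y : V) :
    ⟪o.rightAngleRotation u, y⟫ = 0 ↔ y ∈ Submodule.span ℝ {u} := by
  constructor
  · intro h
    have hω : o.areaForm u y = 0 := by rw [← o.inner_rightAngleRotation_left]; exact h
    rcases le_or_gt 0 ⟪u, y⟫ with hin | hin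
    · have hs : SameRay ℝ u y := (o.nonneg_inner_and_areaForm_eq_zero_iff_sameRay u y).1 ⟨hin, hω⟩
      obtain ⟨r, _, hr⟩ := hs.exists_nonneg_left hu
      exact Submodule.mem_span_singleton.2 ⟨r, hr⟩
    · have hs : SameRay ℝ u (-y) := (o.nonneg_inner_and_areaForm_eq_zero_iff_sameRay u (-y)).1
        ⟨by rw [inner_neg_right]; linarith, by rw [map_neg, hω, neg_zero]⟩
      obtain ⟨r, _, hr⟩ := hs.exists_nonneg_left hu
      exact Submodule.mem_span_singleton.2 ⟨-r, by rw [neg_smul, hr, neg_neg]⟩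
  · intro h
    obtain ⟨c, hc⟩ := Submodule.mem_span_singleton.1 h
    rw [← hc, real_inner_smul_right, o.inner_rightAngleRotation_self, mul_zero]

lemma mem_line_iff_inner {A B n : V}
    (hn : ∀ y, ⟪n, y⟫ = 0 ↔ y ∈ Submodule.span ℝ {B - A}) {x : V} :
    x ∈ line[ℝ, A, B] ↔ ⟪n, x - A⟫ = 0 := by
  constructor
  · intro hx
    apply (hn _).2
    have h2 := AffineSubspace.vsub_mem_direction hx (left_mem_affineSpan_pair ℝ A B)
    rwa [direction_affineSpan, vectorSpan_pair_rev, vsub_eq_sub] at h2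
  · intro hx
    have h2 := (hn _).1 hx
    have h3 : x - A ∈ (line[ℝ, A, B] : AffineSubspace ℝ V).direction := by
      rwa [direction_affineSpan, vectorSpan_pair_rev, vsub_eq_sub]
    have := AffineSubspace.vadd_mem_of_mem_direction h3 (left_mem_affineSpan_pair ℝ A B)
    rwa [vadd_eq_add, sub_add_cancel] at this

lemma inner_base_eq {A B n : V}
    (hn : ∀ y, ⟪n, y⟫ = 0 ↔ y ∈ Submodule.span ℝ {B - A}) {p : V}
    (hp : p ∈ line[ℝ, A, B]) (x : V) : ⟪n, x - p⟫ = ⟪n, x - A⟫ := by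
  have h1 : p - A ∈ Submodule.span ℝ {B - A} := by
    have h2 := AffineSubspace.vsub_mem_direction hp (left_mem_affineSpan_pair ℝ A B)
    rwa [direction_affineSpan, vectorSpan_pair_rev, vsub_eq_sub] at h2
  have h2 : ⟪n, p - A⟫ = 0 := (hn _).2 h1
  have h3 : ⟪n, x - A⟫ = ⟪n, x - p⟫ + ⟪n, p - A⟫ := by
    rw [← inner_add_right]
    congr 1
    abel
  rw [h3, h2, add_zero]

lemma ssameSide_of_inner_pos {A B n : V} (hn0 : n ≠ 0)
    (hn : ∀ y, ⟪n, y⟫ = 0 ↔ y ∈ Submodule.span ℝ {B - A}) {x y : V}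
    (hx : 0 < ⟪n, x - A⟫) (hy : 0 < ⟪n, y - A⟫) :
    (line[ℝ, A, B] : AffineSubspace ℝ V).SSameSide x y := by
  have proj : ∀ z : V, ∃ p ∈ line[ℝ, A, B], z -ᵥ p = (⟪n, z - A⟫ / ‖n‖ ^ 2) • n := by
    intro z
    refine ⟨z - (⟪n, z - A⟫ / ‖n‖ ^ 2) • n, ?_, by rw [vsub_eq_sub]; abel⟩
    apply (mem_line_iff_inner hn).2
    rw [show z - (⟪n, z - A⟫ / ‖n‖ ^ 2) • n - A = (z - A) - (⟪n, z - A⟫ / ‖n‖ ^ 2) • n by abel,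
      inner_sub_right, real_inner_smul_right, real_inner_self_eq_norm_sq]
    have hnn : ‖n‖ ^ 2 ≠ 0 := pow_ne_zero _ (norm_ne_zero_iff.mpr hn0)
    field_simp
    ring
  obtain ⟨px, hpx, hxe⟩ := proj x
  obtain ⟨py, hpy, hye⟩ := proj y
  refine ⟨⟨px, hpx, py, hpy, ?_⟩, ?_, ?_⟩
  · rw [hxe, hye]
    have h1 : (0:ℝ) ≤ ⟪n, x - A⟫ / ‖n‖ ^ 2 := by positivity
    have h2 : (0:ℝ) ≤ ⟪n, y - A⟫ / ‖n‖ ^ 2 := by positivity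
    exact (SameRay.sameRay_nonneg_smul_left n h1).trans (SameRay.sameRay_nonneg_smul_right n h2)
      (fun h => absurd h hn0)
  · intro hmem
    exact absurd ((mem_line_iff_inner hn).1 hmem) (ne_of_gt hx)
  · intro hmem
    exact absurd ((mem_line_iff_inner hn).1 hmem) (ne_of_gt hy)

lemma inner_mul_pos_of_ssameSide {A B n : V}
    (hn : ∀ y, ⟪n, y⟫ = 0 ↔ y ∈ Submodule.span ℝ {B - A}) {x y : V}
    (h : (line[ℝ, A, B] : AffineSubspace ℝ V).SSameSide x y) :
    0 < ⟪n, x - A⟫ * ⟪n, y - A⟫ := by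
  obtain ⟨⟨p₁, hp₁, p₂, hp₂, hray⟩, hx, hy⟩ := h
  have hx0 : x -ᵥ p₁ ≠ 0 := by
    rw [vsub_ne_zero]
    rintro rfl
    exact hx hp₁
  have hy0 : y -ᵥ p₂ ≠ 0 := by
    rw [vsub_ne_zero]
    rintro rfl
    exact hy hp₂
  obtain ⟨r, s, hr, hs, hrs⟩ := hray.exists_pos hx0 hy0
  have hin : r * ⟪n, x - p₁⟫ = s * ⟪n, y - p₂⟫ := by
    rw [← real_inner_smul_right, ← real_inner_smul_right]
    simp only [vsub_eq_sub] at hrs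
    rw [hrs]
  rw [inner_base_eq hn hp₁, inner_base_eq hn hp₂] at hin
  have hfx : ⟪n, x - A⟫ ≠ 0 := fun h0 => hx ((mem_line_iff_inner hn).2 h0)
  rcases hfx.lt_or_gt with hlt | hgt
  · have hy' : ⟪n, y - A⟫ < 0 := by nlinarith
    exact mul_pos_of_neg_of_neg hlt hy'
  · have hy' : 0 < ⟪n, y - A⟫ := by nlinarith
    exact mul_pos hgt hy'

lemma hull_side {A B C D T n : V} (hn0 : n ≠ 0)
    (hn : ∀ y, ⟪n, y⟫ = 0 ↔ y ∈ Submodule.span ℝ {B - A})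
    (hC : 0 < ⟪n, C - A⟫) (hD : 0 < ⟪n, D - A⟫)
    (hT : T ∈ interior (convexHull ℝ ({A, B, C, D} : Set V))) :
    (line[ℝ, A, B] : AffineSubspace ℝ V).SSameSide T C ∧
      (line[ℝ, A, B] : AffineSubspace ℝ V).SSameSide T D := by
  have hBA : ⟪n, B - A⟫ = 0 := (hn _).2 (Submodule.mem_span_singleton_self _)
  have hsub : convexHull ℝ ({A, B, C, D} : Set V) ⊆ {x | 0 ≤ ⟪n, x - A⟫} := by
    apply convexHull_min
    · rintro x (rfl | rfl | rfl | rfl)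
      · simp
      · simp only [Set.mem_setOf_eq, hBA, le_refl]
      · exact le_of_lt hC
      · exact le_of_lt hD
    · have hset : {x : V | 0 ≤ ⟪n, x - A⟫} = {x : V | ⟪n, A⟫ ≤ ⟪n, x⟫} := by
        ext z
        simp only [Set.mem_setOf_eq, inner_sub_right, sub_nonneg]
      rw [hset]
      exact convex_halfSpace_ge ⟨fun a b => inner_add_right n a b,
        fun c a => real_inner_smul_right n a c⟩ _
  have hnp : 0 < ‖n‖ := norm_pos_iff.mpr hn0
  obtain ⟨ε, hε, hball⟩ := Metric.mem_nhds_iff.1 (mem_interior_iff_mem_nhds.1 hT)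
  have hTpos : 0 < ⟪n, T - A⟫ := by
    set δ := ε / (2 * ‖n‖) with hδdef
    have hδ : 0 < δ := by positivity
    have hmem : T - δ • n ∈ convexHull ℝ ({A, B, C, D} : Set V) := by
      apply hball
      rw [Metric.mem_ball, dist_eq_norm]
      rw [show T - δ • n - T = -(δ • n) by abel, norm_neg, norm_smul, Real.norm_eq_abs,
        abs_of_pos hδ, hδdef]
      have hh : ε / (2 * ‖n‖) * ‖n‖ = ε / 2 := by
        field_simp
      rw [hh]
      linarith
    have h0 := hsub hmem
    simp only [Set.mem_setOf_eq] at h0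
    rw [show T - δ • n - A = (T - A) - δ • n by abel, inner_sub_right,
      real_inner_smul_right, real_inner_self_eq_norm_sq] at h0
    nlinarith [mul_pos hδ (pow_pos hnp 2)]
  exact ⟨ssameSide_of_inner_pos hn0 hn hTpos hC, ssameSide_of_inner_pos hn0 hn hTpos hD⟩

lemma interior_sides {A B C D T : V} (hAB : A ≠ B)
    (hconv : (line[ℝ, A, B] : AffineSubspace ℝ V).SSameSide C D)
    (hT : T ∈ interior (convexHull ℝ ({A, B, C, D} : Set V))) :
    (line[ℝ, A, B] : AffineSubspace ℝ V).SSameSide T C ∧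
      (line[ℝ, A, B] : AffineSubspace ℝ V).SSameSide T D := by
  have hu : B - A ≠ 0 := sub_ne_zero.2 (Ne.symm hAB)
  set n := o.rightAngleRotation (B - A) with hndef
  have hn : ∀ y, ⟪n, y⟫ = 0 ↔ y ∈ Submodule.span ℝ {B - A} := ker_J hu
  have hn0 : n ≠ 0 := by
    rw [hndef]
    intro h
    exact hu ((Orientation.rightAngleRotation _).map_eq_zero_iff.1 h)
  have hprod := inner_mul_pos_of_ssameSide hn hconv
  rcases lt_or_gt_of_ne (fun h0 : ⟪n, C - A⟫ = 0 => by simp [h0] at hprod) with hneg | hpos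
  · have hDneg : ⟪n, D - A⟫ < 0 := by nlinarith
    have hn' : ∀ y, ⟪-n, y⟫ = 0 ↔ y ∈ Submodule.span ℝ {B - A} := by
      intro y
      rw [inner_neg_left, neg_eq_zero]
      exact hn y
    exact hull_side (neg_ne_zero.2 hn0) hn'
      (by rw [inner_neg_left]; linarith) (by rw [inner_neg_left]; linarith) hT
  · have hDpos : 0 < ⟪n, D - A⟫ := by nlinarith
    exact hull_side hn0 hn hpos hDpos hT

end Aux3

section Key
variable {V : Type*} [NormedAddCommGroup V] [InnerProductSpace ℝ V]
  [Fact (Module.finrank ℝ V = 2)] [Module.Oriented ℝ V (Fin 2)]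

local notation "⟪" x ", " y "⟫" => @inner ℝ V _ x y

lemma key_vertex {A B C T K Ta Tb : V} (hAB : A ≠ B) (hBC : B ≠ C)
    (hsT1 : (line[ℝ, A, B] : AffineSubspace ℝ V).SSameSide T C)
    (hsK1 : (line[ℝ, A, B] : AffineSubspace ℝ V).SSameSide K C)
    (hsT2 : (line[ℝ, B, C] : AffineSubspace ℝ V).SSameSide T A)
    (hsK2 : (line[ℝ, B, C] : AffineSubspace ℝ V).SSameSide K A)
    (hangle : ∠ T B A = ∠ K B C)
    (hTa1 : midpoint ℝ T Ta ∈ line[ℝ, A, B]) (hTa2 : ⟪Ta - T, B - A⟫ = 0)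
    (hTb1 : midpoint ℝ T Tb ∈ line[ℝ, B, C]) (hTb2 : ⟪Tb - T, C - B⟫ = 0) :
    dist K Ta = dist K Tb := by
  have hTnB : T ≠ B := fun h => hsT1.2.1 (h ▸ right_mem_affineSpan_pair ℝ A B)
  have hKnB : K ≠ B := fun h => hsK1.2.1 (h ▸ right_mem_affineSpan_pair ℝ A B)
  have hAnB : A ≠ B := hAB
  have hCnB : C ≠ B := hBC.symm
  have hCnotin : C ∉ line[ℝ, A, B] := hsT1.2.2
  -- signs
  have s1 : (∡ A B T).sign = (∡ A B C).sign := by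
    have h := AffineSubspace.SSameSide.oangle_sign_eq (left_mem_affineSpan_pair ℝ A B)
      (right_mem_affineSpan_pair ℝ A B) hsT1.symm
    calc (∡ A B T).sign = (∡ T A B).sign := oangle_rotate_sign T A B
      _ = (∡ B T A).sign := oangle_rotate_sign B T A
      _ = -(∡ A T B).sign := (oangle_swap₁₃_sign A T B).symm ▸ rfl
      _ = -(∡ A C B).sign := by rw [h]
      _ = (∡ B C A).sign := oangle_swap₁₃_sign A C B
      _ = (∡ A B C).sign := oangle_rotate_sign A B C
  have s2 : (∡ K B C).sign = (∡ A B C).sign := by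
    have h := AffineSubspace.SSameSide.oangle_sign_eq (right_mem_affineSpan_pair ℝ B C)
      (left_mem_affineSpan_pair ℝ B C) hsK2.symm
    -- h : (∡ C K B).sign = (∡ C A B).sign
    have h2 : (∡ C B K).sign = (∡ C B A).sign := by
      calc (∡ C B K).sign = (∡ K C B).sign := oangle_rotate_sign K C B
        _ = (∡ B K C).sign := oangle_rotate_sign B K C
        _ = -(∡ C K B).sign := (oangle_swap₁₃_sign C K B).symm ▸ rfl
        _ = -(∡ C A B).sign := by rw [h]
        _ = (∡ B A C).sign := oangle_swap₁₃_sign C A B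
        _ = (∡ C B A).sign := oangle_rotate_sign C B A
    calc (∡ K B C).sign = -(∡ C B K).sign := ((oangle_swap₁₃_sign C B K) ▸ rfl)
      _ = -(∡ C B A).sign := by rw [h2]
      _ = (∡ A B C).sign := oangle_swap₁₃_sign C B A
  have hβeq : ∡ A B T = ∡ K B C :=
    oangle_eq_of_angle_eq_of_sign_eq ((angle_comm A B T).trans hangle) (s1.trans s2.symm)
  -- reflection data
  have RA := refl_pt hTa1 hTa2
  have RB := refl_pt hTb1 hTb2
  have hdTa : dist B Ta = dist B T := RA.1.2
  have hdTb : dist B Tb = dist B T := RB.1.1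
  have hTaB : Ta ≠ B := by
    intro h
    rw [h, dist_self] at hdTa
    exact hTnB (dist_eq_zero.1 hdTa.symm).symm
  have hTbB : Tb ≠ B := by
    intro h
    rw [h, dist_self] at hdTb
    exact hTnB (dist_eq_zero.1 hdTb.symm).symm
  set β := ∡ A B T with hβdef
  set σ := ∡ A B C with hσdef
  have ho1 : ∡ A B Ta = -β := RA.2.2
  have ho2 : ∡ C B Tb = -∡ C B T := RB.2.1
  have hCBK : ∡ C B K = -β := by
    rw [oangle_rev K B C, ← hβeq]
  have add1 : ∡ A B C + ∡ C B K = ∡ A B K := oangle_add hAnB hCnB hKnB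
  have add2 : ∡ Ta B A + ∡ A B K = ∡ Ta B K := oangle_add hTaB hAnB hKnB
  have add3 : ∡ C B A + ∡ A B T = ∡ C B T := oangle_add hCnB hAnB hTnB
  have add4 : ∡ Tb B C + ∡ C B K = ∡ Tb B K := oangle_add hTbB hCnB hKnB
  have hTaBA : ∡ Ta B A = β := by
    rw [oangle_rev A B Ta, ho1, neg_neg]
  have hCBA : ∡ C B A = -σ := by
    rw [oangle_rev A B C]
  have hTbBC : ∡ Tb B C = ∡ C B T := by
    rw [oangle_rev C B Tb, ho2, neg_neg]
  have hk1 : ∡ Ta B K = σ := by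
    rw [← add2, hTaBA, ← add1, hCBK]
    abel
  have hk2 : ∡ Tb B K = -σ := by
    rw [← add4, hTbBC, ← add3, hCBA, hCBK]
    abel
  -- unoriented angles at B
  have hcos : Real.cos (∠ K B Ta) = Real.cos (∠ K B Tb) := by
    rw [angle_comm K B Ta, angle_comm K B Tb,
      angle_eq_abs_oangle_toReal hTaB hKnB, angle_eq_abs_oangle_toReal hTbB hKnB, hk1, hk2,
      Real.cos_abs, Real.cos_abs, Real.Angle.cos_toReal, Real.Angle.cos_toReal,
      Real.Angle.cos_neg]
  have lc1 := EuclideanGeometry.law_cos K B Ta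
  have lc2 := EuclideanGeometry.law_cos K B Tb
  have e1 : dist Ta B = dist Tb B := by
    rw [dist_comm Ta B, dist_comm Tb B, hdTa, hdTb]
  have hsq : dist K Ta * dist K Ta = dist K Tb * dist K Tb := by
    rw [lc1, lc2, e1, hcos]
  calc dist K Ta = √(dist K Ta * dist K Ta) := (Real.sqrt_mul_self dist_nonneg).symm
    _ = √(dist K Tb * dist K Tb) := by rw [hsq]
    _ = dist K Tb := Real.sqrt_mul_self dist_nonneg

end Key

/-- Isogonal conjugates in a convex quadrilateral `ABCD`: if interior points `T`, `K`
satisfy `∠TAB = ∠KAD`, `∠TBA = ∠KBC`, `∠TCB = ∠KCD`, `∠TDC = ∠KDA`, then the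
reflections `Ta`, `Tb`, `Tc`, `Td` of `T` over the side-lines `AB`, `BC`, `CD`, `DA`
(characterized by the midpoint lying on the line and the segment being perpendicular
to it) lie on a common circle centered at `K`. -/
theorem isogonal_conjugate_quadrilateral (A B C D T K Ta Tb Tc Td : EuclideanSpace ℝ (Fin 2))
    (hconvAB : (affineSpan ℝ {A, B}).SSameSide C D)
    (hconvBC : (affineSpan ℝ {B, C}).SSameSide D A)
    (hconvCD : (affineSpan ℝ {C, D}).SSameSide A B)
    (hconvDA : (affineSpan ℝ {D, A}).SSameSide B C)
    (hTin : T ∈ interior (convexHull ℝ ({A, B, C, D} : Set (EuclideanSpace ℝ (Fin 2)))))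
    (hKin : K ∈ interior (convexHull ℝ ({A, B, C, D} : Set (EuclideanSpace ℝ (Fin 2)))))
    (hA : ∠ T A B = ∠ K A D) (hB : ∠ T B A = ∠ K B C)
    (hC : ∠ T C B = ∠ K C D) (hD : ∠ T D C = ∠ K D A)
    (hTa : midpoint ℝ T Ta ∈ line[ℝ, A, B] ∧ inner ℝ (Ta - T) (B - A) = (0 : ℝ))
    (hTb : midpoint ℝ T Tb ∈ line[ℝ, B, C] ∧ inner ℝ (Tb - T) (C - B) = (0 : ℝ))
    (hTc : midpoint ℝ T Tc ∈ line[ℝ, C, D] ∧ inner ℝ (Tc - T) (D - C) = (0 : ℝ))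
    (hTd : midpoint ℝ T Td ∈ line[ℝ, D, A] ∧ inner ℝ (Td - T) (A - D) = (0 : ℝ)) :
    dist K Ta = dist K Tb ∧ dist K Tb = dist K Tc ∧ dist K Tc = dist K Td := by
  haveI : Fact (Module.finrank ℝ (EuclideanSpace ℝ (Fin 2)) = 2) := ⟨finrank_euclideanSpace_fin⟩
  haveI : Module.Oriented ℝ (EuclideanSpace ℝ (Fin 2)) (Fin 2) :=
    ⟨(EuclideanSpace.basisFun (Fin 2) ℝ).toBasis.orientation⟩
  have hAB : A ≠ B := by rintro rfl; exact hconvBC.2.2 (left_mem_affineSpan_pair ℝ A C)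
  have hBC : B ≠ C := by rintro rfl; exact hconvCD.2.2 (left_mem_affineSpan_pair ℝ B D)
  have hCD : C ≠ D := by rintro rfl; exact hconvDA.2.2 (left_mem_affineSpan_pair ℝ C A)
  have hDA : D ≠ A := by rintro rfl; exact hconvAB.2.2 (left_mem_affineSpan_pair ℝ D B)
  have hset1 : ({B, C, D, A} : Set (EuclideanSpace ℝ (Fin 2))) = {A, B, C, D} := by
    ext x; simp only [Set.mem_insert_iff, Set.mem_singleton_iff]; tauto
  have hset2 : ({C, D, A, B} : Set (EuclideanSpace ℝ (Fin 2))) = {A, B, C, D} := by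
    ext x; simp only [Set.mem_insert_iff, Set.mem_singleton_iff]; tauto
  have hset3 : ({D, A, B, C} : Set (EuclideanSpace ℝ (Fin 2))) = {A, B, C, D} := by
    ext x; simp only [Set.mem_insert_iff, Set.mem_singleton_iff]; tauto
  have sT_AB := interior_sides hAB hconvAB hTin
  have sK_AB := interior_sides hAB hconvAB hKin
  have sT_BC := interior_sides hBC hconvBC (hset1 ▸ hTin)
  have sK_BC := interior_sides hBC hconvBC (hset1 ▸ hKin)
  have sT_CD := interior_sides hCD hconvCD (hset2 ▸ hTin)
  have sK_CD := interior_sides hCD hconvCD (hset2 ▸ hKin)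
  have sT_DA := interior_sides hDA hconvDA (hset3 ▸ hTin)
  have sK_DA := interior_sides hDA hconvDA (hset3 ▸ hKin)
  refine ⟨?_, ?_, ?_⟩
  · exact key_vertex hAB hBC sT_AB.1 sK_AB.1 sT_BC.2 sK_BC.2 hB hTa.1 hTa.2 hTb.1 hTb.2
  · exact key_vertex hBC hCD sT_BC.1 sK_BC.1 sT_CD.2 sK_CD.2 hC hTb.1 hTb.2 hTc.1 hTc.2
  · exact key_vertex hCD hDA sT_CD.1 sK_CD.1 sT_DA.2 sK_DA.2 hD hTc.1 hTc.2 hTd.1 hTd.2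
end

section
/- Isogonal conjugate reflection lemma (triangle case): Let P be a point inside triangle ABC with isogonal conjugate Q (∠PAB = ∠QAC, ∠PBC = ∠QBA, ∠PCA = ∠QCB). Then the reflections of P over the three side-lines BC, CA, AB lie on a common circle centered at Q. -/
/-!
Seen from the vertex `A`, write `p = P - A`, `q = Q - A`, and let `u`, `v` point along `AB`, `AC`.
Reflecting `P` in the line through `A` with direction `u` gives a point at squared distance
`‖p + q‖² - 4 ⟪p, u⟫ ⟪q, u⟫ / ‖u‖²` from `Q`. So `Q` is equidistant from the reflections of `P`
in `AB` and `AC` as soon as `⟪p, u⟫ ⟪q, u⟫ / ‖u‖² = ⟪p, v⟫ ⟪q, v⟫ / ‖v‖²`, and this identity holds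
when the oriented angles from `u` to `p` and from `v` to `q` are opposite.

The unoriented equality `∠PAB = ∠QAC` gives opposite oriented angles only if `Q` and `B` lie on
the same side of `AC`. To see that they do, take barycentric coordinates `(a, b, c)` of `Q`. The
angle condition at each vertex, compared with the angle of the triangle there, shows that one
positive coordinate forces the next one to be positive. Going round the three vertices, and using
`a + b + c = 1`, all three coordinates are positive, so `Q` is interior too.
-/

open EuclideanGeometry InnerProductGeometry
open scoped NNReal RealInnerProductSpace

local notation "ℝ²" => EuclideanSpace ℝ (Fin 2)

namespace InnerProductGeometry

variable {V : Type*} [NormedAddCommGroup V] [InnerProductSpace ℝ V]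

theorem angle_smul_add_smul_lt_angle {u v : V} (huv : LinearIndependent ℝ ![u, v]) {a b : ℝ}
    (ha : 0 < a) (hb : 0 < b) : angle (a • u + b • v) u < angle v u := by
  have hw : a • u + b • v ≠ 0 := fun h => ha.ne' (LinearIndependent.pair_iff.1 huv a b h).1
  have hsplit := angle_eq_angle_add_add_angle_add_of_mem_span hw
    (Submodule.mem_span_pair.2 ⟨⟨a, ha.le⟩, ⟨b, hb.le⟩, rfl⟩)
  have hv : angle v (a • u + b • v) ≠ 0 := by
    rw [Ne, angle_eq_zero_iff]
    rintro ⟨-, r, -, hr⟩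
    refine ha.ne' (LinearIndependent.pair_iff.1 huv a (b - r) ?_).1
    rw [sub_smul, ← add_sub_assoc, hr, sub_self]
  rw [angle_comm v u, hsplit, angle_comm]
  rw [angle_comm] at hv
  linarith [(angle_nonneg (a • u + b • v) v).lt_of_ne' hv]

theorem angle_le_angle_smul_add_smul {u v : V} (hu : u ≠ 0) {b c : ℝ} (hb : 0 < b) (hc : c ≤ 0) :
    angle u v ≤ angle (b • u + c • v) v := by
  have hmem : u ∈ Submodule.span ℝ≥0 {b • u + c • v, v} := by
    refine Submodule.mem_span_pair.2 ⟨b⁻¹.toNNReal, (-c / b).toNNReal, ?_⟩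
    rw [NNReal.smul_def, NNReal.smul_def, Real.coe_toNNReal _ (inv_nonneg.2 hb.le),
      Real.coe_toNNReal _ (div_nonneg (neg_nonneg.2 hc) hb.le)]
    match_scalars <;> field_simp
    ring
  rw [angle_eq_angle_add_add_angle_add_of_mem_span hu hmem]
  linarith [angle_nonneg (b • u + c • v) u]

theorem pos_of_angle_smul_add_smul_eq {u v : V} (huv : LinearIndependent ℝ ![u, v])
    {a b c d : ℝ} (ha : 0 < a) (hb : 0 < b) (hc : 0 < c)
    (h : angle (a • u + b • v) u = angle (c • u + d • v) v) : 0 < d := by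
  by_contra! hd
  have hlt := angle_smul_add_smul_lt_angle huv ha hb
  have hle := angle_le_angle_smul_add_smul (v := v) (by simpa using huv.ne_zero 0) hc hd
  rw [angle_comm v u] at hlt
  linarith

end InnerProductGeometry

section Reflection

variable {V : Type*} [NormedAddCommGroup V] [InnerProductSpace ℝ V]

def IsReflectionAcross (X Y P R : V) : Prop :=
  midpoint ℝ P R ∈ line[ℝ, X, Y] ∧ ⟪R - P, Y - X⟫ = 0

theorem IsReflectionAcross.symm {X Y P R : V} (h : IsReflectionAcross X Y P R) :
    IsReflectionAcross Y X P R :=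
  ⟨Set.pair_comm X Y ▸ h.1, by rw [← neg_sub Y X, inner_neg_right, h.2, neg_zero]⟩

theorem IsReflectionAcross.dist_sq_mul_norm_sq {X Y P R : V} (h : IsReflectionAcross X Y P R)
    (Q : V) :
    dist Q R ^ 2 * ‖Y - X‖ ^ 2
      = ‖(Q - X) + (P - X)‖ ^ 2 * ‖Y - X‖ ^ 2 - 4 * ⟪P - X, Y - X⟫ * ⟪Q - X, Y - X⟫ := by
  obtain ⟨hmid, horth⟩ := h
  obtain ⟨t, ht⟩ := mem_affineSpan_pair_iff_exists_lineMap_eq.1 hmid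
  have hR : R - X = (2 * t) • (Y - X) - (P - X) := by
    rw [← midpoint_eq_iff.1 ht.symm, AffineEquiv.pointReflection_apply, AffineMap.lineMap_apply]
    simp only [vsub_eq_sub, vadd_eq_add]
    module
  have hfoot : t * ‖Y - X‖ ^ 2 = ⟪P - X, Y - X⟫ := by
    have hRP : R - P = (2 * t) • (Y - X) - (2 : ℝ) • (P - X) := by
      rw [← sub_sub_sub_cancel_right R P X, hR]
      module
    rw [hRP, inner_sub_left, real_inner_smul_left, real_inner_smul_left,
      real_inner_self_eq_norm_sq] at horth
    linarith
  have hQR : Q - R = ((Q - X) + (P - X)) - (2 * t) • (Y - X) := by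
    rw [← sub_sub_sub_cancel_right Q R X, hR]
    abel
  rw [dist_eq_norm, hQR, norm_sub_sq_real, real_inner_smul_right, norm_smul, inner_add_left,
    mul_pow, Real.norm_eq_abs, sq_abs]
  linear_combination (4 * t * ‖Y - X‖ ^ 2 - 4 * ⟪Q - X, Y - X⟫) * hfoot

theorem IsReflectionAcross.dist_eq_dist {X Y Z P Q R S : V} (hR : IsReflectionAcross X Y P R)
    (hS : IsReflectionAcross X Z P S) (hY : Y ≠ X) (hZ : Z ≠ X)
    (h : ⟪P - X, Y - X⟫ * ⟪Q - X, Y - X⟫ * ‖Z - X‖ ^ 2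
      = ⟪P - X, Z - X⟫ * ⟪Q - X, Z - X⟫ * ‖Y - X‖ ^ 2) :
    dist Q R = dist Q S := by
  have hYX : ‖Y - X‖ ≠ 0 := norm_ne_zero_iff.2 (sub_ne_zero.2 hY)
  have hZX : ‖Z - X‖ ≠ 0 := norm_ne_zero_iff.2 (sub_ne_zero.2 hZ)
  have hsq : dist Q R ^ 2 * (‖Y - X‖ ^ 2 * ‖Z - X‖ ^ 2)
      = dist Q S ^ 2 * (‖Y - X‖ ^ 2 * ‖Z - X‖ ^ 2) := by
    linear_combination ‖Z - X‖ ^ 2 * hR.dist_sq_mul_norm_sq Q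
      - ‖Y - X‖ ^ 2 * hS.dist_sq_mul_norm_sq Q - 4 * h
  exact (pow_left_inj₀ dist_nonneg dist_nonneg two_ne_zero).1
    (mul_right_cancel₀ (by positivity) hsq)

end Reflection

theorem range_vecCons_three {α : Type*} (a b c : α) : Set.range ![a, b, c] = {a, b, c} := by
  rw [Matrix.range_cons, Matrix.range_cons, Matrix.range_cons, Matrix.range_empty,
    Set.union_empty, Set.singleton_union, Set.singleton_union]

section Barycentric

variable {V : Type*} [NormedAddCommGroup V] [NormedSpace ℝ V]

def triangleBasis {A B C : V} (h : AffineIndependent ℝ ![A, B, C])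
    (hs : affineSpan ℝ {A, B, C} = ⊤) : AffineBasis (Fin 3) ℝ V :=
  ⟨![A, B, C], h, by rwa [range_vecCons_three]⟩

theorem exists_barycentric {A B C : V} (h : AffineIndependent ℝ ![A, B, C])
    (hs : affineSpan ℝ {A, B, C} = ⊤) (X : V) :
    ∃ a b c : ℝ, a + b + c = 1 ∧ X = a • A + b • B + c • C := by
  have hsum := (triangleBasis h hs).sum_coord_apply_eq_one X
  have hX := (triangleBasis h hs).linear_combination_coord_eq_self X
  rw [Fin.sum_univ_three] at hsum hX
  exact ⟨_, _, _, hsum, hX.symm⟩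

theorem exists_pos_barycentric_of_mem_interior {A B C X : V}
    (h : AffineIndependent ℝ ![A, B, C]) (hX : X ∈ interior (convexHull ℝ {A, B, C})) :
    ∃ a b c : ℝ, 0 < a ∧ 0 < b ∧ 0 < c ∧ a + b + c = 1 ∧ X = a • A + b • B + c • C := by
  set T := triangleBasis h (affineSpan_eq_top_of_nonempty_interior ⟨X, hX⟩)
  have hpos : ∀ i, 0 < T.coord i X := by
    rw [← range_vecCons_three] at hX
    change X ∈ interior (convexHull ℝ (Set.range T)) at hX
    rwa [T.interior_convexHull] at hX
  have hsum := T.sum_coord_apply_eq_one X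
  have hX := T.linear_combination_coord_eq_self X
  rw [Fin.sum_univ_three] at hsum hX
  exact ⟨_, _, _, hpos 0, hpos 1, hpos 2, hsum, hX.symm⟩

end Barycentric

section Triangle

variable {V : Type*} [NormedAddCommGroup V] [InnerProductSpace ℝ V]

theorem AffineIndependent.rotate {A B C : V} (h : AffineIndependent ℝ ![A, B, C]) :
    AffineIndependent ℝ ![B, C, A] := by
  rw [affineIndependent_iff_not_collinear_set] at h ⊢
  rwa [Set.insert_comm A B, Set.pair_comm A C] at h

theorem AffineIndependent.linearIndependent_sub {A B C : V}
    (h : AffineIndependent ℝ ![A, B, C]) : LinearIndependent ℝ ![B - A, C - A] := by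
  rw [affineIndependent_iff_linearIndependent_vsub ℝ _ (0 : Fin 3), ←
    linearIndependent_equiv (finSuccAboveEquiv (0 : Fin 3))] at h
  convert h
  · ext i
    fin_cases i <;> rfl
  · rfl

theorem sub_eq_smul_sub_add_smul_sub {A B C X : V} {a b c : ℝ} (hs : a + b + c = 1)
    (hX : X = a • A + b • B + c • C) : X - A = b • (B - A) + c • (C - A) := by
  rw [hX, show a = 1 - b - c by linarith]
  module

theorem barycentric_pos_of_pos_of_angle_eq {A B C P Q : V}
    (hABC : AffineIndependent ℝ ![A, B, C]) {α β γ a b c : ℝ} (hsP : α + β + γ = 1)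
    (hP : P = α • A + β • B + γ • C) (hβ : 0 < β) (hγ : 0 < γ) (hsQ : a + b + c = 1)
    (hQ : Q = a • A + b • B + c • C) (hb : 0 < b) (h : ∠ P A B = ∠ Q A C) : 0 < c := by
  refine pos_of_angle_smul_add_smul_eq hABC.linearIndependent_sub hβ hγ hb ?_
  rw [← sub_eq_smul_sub_add_smul_sub hsP hP, ← sub_eq_smul_sub_add_smul_sub hsQ hQ]
  exact h

theorem barycentric_pos_of_isogonal {A B C P Q : V} (hABC : AffineIndependent ℝ ![A, B, C])
    {α β γ a b c : ℝ} (hsP : α + β + γ = 1) (hP : P = α • A + β • B + γ • C) (hα : 0 < α)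
    (hβ : 0 < β) (hγ : 0 < γ) (hsQ : a + b + c = 1) (hQ : Q = a • A + b • B + c • C)
    (hA : ∠ P A B = ∠ Q A C) (hB : ∠ P B C = ∠ Q B A) (hC : ∠ P C A = ∠ Q C B) :
    0 < a ∧ 0 < b ∧ 0 < c := by
  have hbc (hb : 0 < b) : 0 < c :=
    barycentric_pos_of_pos_of_angle_eq hABC hsP hP hβ hγ hsQ hQ hb hA
  have hca (hc : 0 < c) : 0 < a :=
    barycentric_pos_of_pos_of_angle_eq hABC.rotate (α := β) (β := γ) (γ := α) (a := b) (b := c)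
      (c := a) (by linarith) (by rw [hP]; abel) hγ hα (by linarith) (by rw [hQ]; abel) hc hB
  have hab (ha : 0 < a) : 0 < b :=
    barycentric_pos_of_pos_of_angle_eq hABC.rotate.rotate (α := γ) (β := α) (γ := β) (a := c)
      (b := a) (c := b) (by linarith) (by rw [hP]; abel) hα hβ (by linarith) (by rw [hQ]; abel)
      ha hC
  have hsome : 0 < a ∨ 0 < b ∨ 0 < c := by
    by_contra! h
    linarith
  rcases hsome with ha | hb | hc
  · exact ⟨ha, hab ha, hbc (hab ha)⟩
  · exact ⟨hca (hbc hb), hb, hbc hb⟩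
  · exact ⟨hca hc, hab (hca hc), hc⟩

end Triangle

namespace InnerProductGeometry

def cross (x y : ℝ²) : ℝ := x 0 * y 1 - x 1 * y 0

theorem inner_eq_coords (x y : ℝ²) : ⟪x, y⟫ = x 0 * y 0 + x 1 * y 1 := by
  simp [PiLp.inner_apply, Fin.sum_univ_two, mul_comm]

theorem norm_sq_eq_coords (x : ℝ²) : ‖x‖ ^ 2 = x 0 * x 0 + x 1 * x 1 := by
  rw [← real_inner_self_eq_norm_sq, inner_eq_coords]

theorem sin_angle_mul_norm_mul_norm_eq_abs_cross (x y : ℝ²) :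
    Real.sin (angle x y) * (‖x‖ * ‖y‖) = |cross x y| := by
  rw [sin_angle_mul_norm_mul_norm, ← Real.sqrt_sq_eq_abs, inner_eq_coords, inner_eq_coords,
    inner_eq_coords, cross]
  ring_nf

theorem cross_ne_zero_of_linearIndependent {u v : ℝ²} (h : LinearIndependent ℝ ![u, v]) :
    cross u v ≠ 0 := by
  intro h0
  have h1 := LinearIndependent.pair_iff.1 h (v 1) (-u 1) (by
    ext i; fin_cases i <;> simp [cross] at h0 ⊢ <;> linarith)
  have h2 := LinearIndependent.pair_iff.1 h (v 0) (-u 0) (by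
    ext i; fin_cases i <;> simp [cross] at h0 ⊢ <;> linarith)
  refine h.ne_zero 0 ?_
  ext i; fin_cases i <;> simp <;> linarith [h1.2, h2.2]

theorem cross_smul_add_smul_mul_cross_smul_add_smul_neg {u v : ℝ²} (huv : cross u v ≠ 0)
    {a b c d : ℝ} (hb : 0 < b) (hc : 0 < c) :
    cross (a • u + b • v) u * cross (c • u + d • v) v < 0 := by
  have h : cross (a • u + b • v) u * cross (c • u + d • v) v = -(b * c * cross u v ^ 2) := by
    simp only [cross, PiLp.add_apply, PiLp.smul_apply, smul_eq_mul]
    ring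
  rw [h, neg_lt_zero]
  positivity

theorem inner_mul_inner_eq_of_angle_eq {p q u v : ℝ²} (h : angle p u = angle q v)
    (hs : cross p u * cross q v < 0) :
    ⟪p, u⟫ * ⟪q, u⟫ * ‖v‖ ^ 2 = ⟪p, v⟫ * ⟪q, v⟫ * ‖u‖ ^ 2 := by
  have hcos : ⟪p, u⟫ * (‖q‖ * ‖v‖) = ⟪q, v⟫ * (‖p‖ * ‖u‖) := by
    rw [← cos_angle_mul_norm_mul_norm, ← cos_angle_mul_norm_mul_norm, h]
    ring
  have hsin : |cross p u| * (‖q‖ * ‖v‖) = |cross q v| * (‖p‖ * ‖u‖) := by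
    rw [← sin_angle_mul_norm_mul_norm_eq_abs_cross, ← sin_angle_mul_norm_mul_norm_eq_abs_cross, h]
    ring
  have hsin' : cross p u * (‖q‖ * ‖v‖) = -(cross q v * (‖p‖ * ‖u‖)) := by
    rcases mul_neg_iff.1 hs with ⟨h1, h2⟩ | ⟨h1, h2⟩
    · rw [abs_of_pos h1, abs_of_neg h2] at hsin
      linarith
    · rw [abs_of_neg h1, abs_of_pos h2] at hsin
      linarith
  have hp : p ≠ 0 := by
    rintro rfl
    simp [cross] at hs
  have hu : u ≠ 0 := by
    rintro rfl
    simp [cross] at hs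
  -- The oriented angles from `u` to `p` and from `v` to `q` are opposite.
  have hopp : cross p u * ⟪q, v⟫ + cross q v * ⟪p, u⟫ = 0 := by
    have : (cross p u * ⟪q, v⟫ + cross q v * ⟪p, u⟫) * (‖p‖ * ‖u‖) = 0 := by
      linear_combination (-cross p u) * hcos + ⟪p, u⟫ * hsin'
    exact (mul_eq_zero.1 this).resolve_right (by positivity)
  rw [norm_sq_eq_coords, norm_sq_eq_coords]
  simp only [inner_eq_coords, cross] at hopp ⊢
  linear_combination (u 0 * v 1 - u 1 * v 0) * hopp

end InnerProductGeometry

theorem dist_reflections_eq_of_angle_eq {A B C P Q R S : ℝ²}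
    (hABC : AffineIndependent ℝ ![A, B, C]) {α β γ a b c : ℝ} (hsP : α + β + γ = 1)
    (hP : P = α • A + β • B + γ • C) (hγ : 0 < γ) (hsQ : a + b + c = 1)
    (hQ : Q = a • A + b • B + c • C) (hb : 0 < b) (h : ∠ P A B = ∠ Q A C)
    (hR : IsReflectionAcross A C P R) (hS : IsReflectionAcross A B P S) :
    dist Q R = dist Q S := by
  have hind := hABC.linearIndependent_sub
  have hsign : cross (P - A) (B - A) * cross (Q - A) (C - A) < 0 := by
    rw [sub_eq_smul_sub_add_smul_sub hsP hP, sub_eq_smul_sub_add_smul_sub hsQ hQ]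
    exact cross_smul_add_smul_mul_cross_smul_add_smul_neg
      (cross_ne_zero_of_linearIndependent hind) hγ hb
  exact hR.dist_eq_dist hS (by simpa [sub_ne_zero] using hind.ne_zero 1)
    (by simpa [sub_ne_zero] using hind.ne_zero 0) (inner_mul_inner_eq_of_angle_eq h hsign).symm

/-- Isogonal conjugate reflection lemma (triangle case): if `P` is an interior point of
triangle `ABC` and `Q` is its isogonal conjugate (`∠PAB = ∠QAC`, `∠PBC = ∠QBA`,
`∠PCA = ∠QCB`), then the reflections `Pa`, `Pb`, `Pc` of `P` over the side-lines `BC`,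
`CA`, `AB` (characterized by the midpoint lying on the line and the segment being
perpendicular to it) lie on a common circle centered at `Q`. -/
theorem isogonal_conjugate_reflections (A B C P Q Pa Pb Pc : EuclideanSpace ℝ (Fin 2))
    (hABC : AffineIndependent ℝ ![A, B, C])
    (hPin : P ∈ interior (convexHull ℝ ({A, B, C} : Set (EuclideanSpace ℝ (Fin 2)))))
    (hA : ∠ P A B = ∠ Q A C) (hB : ∠ P B C = ∠ Q B A) (hC : ∠ P C A = ∠ Q C B)
    (hPa : midpoint ℝ P Pa ∈ line[ℝ, B, C] ∧ inner ℝ (Pa - P) (C - B) = (0 : ℝ))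
    (hPb : midpoint ℝ P Pb ∈ line[ℝ, C, A] ∧ inner ℝ (Pb - P) (A - C) = (0 : ℝ))
    (hPc : midpoint ℝ P Pc ∈ line[ℝ, A, B] ∧ inner ℝ (Pc - P) (B - A) = (0 : ℝ)) :
    dist Q Pa = dist Q Pb ∧ dist Q Pb = dist Q Pc := by
  obtain ⟨α, β, γ, hα, hβ, hγ, hsP, hP⟩ := exists_pos_barycentric_of_mem_interior hABC hPin
  obtain ⟨a, b, c, hsQ, hQ⟩ :=
    exists_barycentric hABC (affineSpan_eq_top_of_nonempty_interior ⟨P, hPin⟩) Q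
  obtain ⟨-, hb, hc⟩ := barycentric_pos_of_isogonal hABC hsP hP hα hβ hγ hsQ hQ hA hB hC
  have hPbc : dist Q Pb = dist Q Pc :=
    dist_reflections_eq_of_angle_eq hABC hsP hP hγ hsQ hQ hb hA (IsReflectionAcross.symm hPb) hPc
  have hPca : dist Q Pc = dist Q Pa :=
    dist_reflections_eq_of_angle_eq hABC.rotate (α := β) (β := γ) (γ := α) (a := b) (b := c)
      (c := a) (by linarith) (by rw [hP]; abel) hα (by linarith) (by rw [hQ]; abel) hc hB
      (IsReflectionAcross.symm hPc) hPa
  exact ⟨hPca.symm.trans hPbc.symm, hPbc⟩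
end
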